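/- arXiv:2201.02905 — 3 statements merged into one kernel-verified Lean document; each statement's English description precedes it below -/
import Mathlib

section
/- Every bipartite (47,3)-HEDCS H with vertex parts P and Q having at least 42·|P|/2 = 21·|P| edges satisfies |Q| ≥ 0.569·|P|. -/
open Finset

variable {V : Type*} [DecidableEq V]

/-- Degree of a vertex in an edge set. -/
def deg (E : Finset (Sym2 V)) (v : V) : ℕ := (E.filter (fun e => v ∈ e)).card

/-- Edge-degree: the sum of the degrees of the two endpoints. -/
def edeg (E : Finset (Sym2 V)) (e : Sym2 V) : ℕ :=
  Sym2.lift ⟨fun u v => deg E u + deg E v, fun _ _ => add_comm _ _⟩ e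

/-- Generalized `(β,β⁻,k)`-HEDCS of `G`: a hierarchical decomposition
`∅ = H_0 ⊆ H_1 ⊆ … ⊆ H_k = Hs` with edge-degrees in `H_i` of new edges at most `β`,
and every edge of `G` outside `Hs` has edge-degree at least `β⁻` in `Hs`. -/
def IsHEDCSgen (G Hs : Finset (Sym2 V)) (β βm k : ℕ) : Prop :=
  Hs ⊆ G ∧ ∃ H : ℕ → Finset (Sym2 V),
    H 0 = ∅ ∧ H k = Hs ∧
    (∀ i < k, H i ⊆ H (i + 1)) ∧
    (∀ i, 1 ≤ i → i ≤ k → ∀ e ∈ H i \ H (i - 1), edeg (H i) e ≤ β) ∧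
    (∀ e ∈ G \ Hs, βm ≤ edeg Hs e)

/-- `(β,k)`-HEDCS of `G`. -/
def IsHEDCS (G Hs : Finset (Sym2 V)) (β k : ℕ) : Prop :=
  IsHEDCSgen G Hs β (β - 1) k

/-- Bipartite `(β,k)`-HEDCS with vertex parts `P` and `Q`
(the base graph is `Hs` itself, so the second HEDCS condition is vacuous). -/
def IsBipartiteHEDCS (P Q : Finset V) (Hs : Finset (Sym2 V)) (β k : ℕ) : Prop :=
  Disjoint P Q ∧
  (∀ e ∈ Hs, ∃ u v, e = s(u, v) ∧ u ∈ P ∧ v ∈ Q) ∧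
  ∃ H : ℕ → Finset (Sym2 V),
    H 0 = ∅ ∧ H k = Hs ∧
    (∀ i < k, H i ⊆ H (i + 1)) ∧
    (∀ i, 1 ≤ i → i ≤ k → ∀ e ∈ H i \ H (i - 1), edeg (H i) e ≤ β)

/-- A matching: a set of pairwise vertex-disjoint (non-loop) edges. -/
def IsMatching (M : Finset (Sym2 V)) : Prop :=
  (∀ e ∈ M, ¬ e.IsDiag) ∧
  ∀ e ∈ M, ∀ f ∈ M, e ≠ f → ∀ v : V, v ∈ e → v ∉ f

/-- The maximum matching size of the edge set `E`. -/
noncomputable def matchNum (E : Finset (Sym2 V)) : ℕ :=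
  sSup {n : ℕ | ∃ M : Finset (Sym2 V), M ⊆ E ∧ IsMatching M ∧ M.card = n}


def Wt1 : List Int := [0, 0, 0, 0, 0, 0, 0, 1133, 1272, 1272, 1807, 2069, 2370, 2598, 2828, 3049, 3306, 3544, 3758, 3959, 4123, 4276, 4399, 5024, 5024, 5024, 5024, 5024, 5024, 5024, 5024, 5024, 5024, 5048, 5060, 5085, 5085, 5085, 5085, 5085, 5085, 5085, 5085, 5085, 5085, 5085, 5085, 5085]
def Wf1 (t : Nat) : Int := (Wt1).getD t 5085
def Wt2 : List Int := [0, 0, 0, 0, 1999, 2871, 3925, 4988, 5797, 6422, 6931, 7344, 7696, 8108, 8678, 9296, 10208, 10208, 10556, 10848, 11295, 11984, 11984, 12334, 12728, 13303, 13303, 13436, 13521, 13570, 13570, 13570, 13570, 13570, 13570, 13570, 13570, 13570, 13570, 13570, 13570, 13570, 13570, 13570, 13570, 13570, 13570, 13570]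
def Wf2 (t : Nat) : Int := (Wt2).getD t 13570
def Wt3 : List Int := [0, 0, 0, 0, 0, 0, 7323, 12032, 15108, 17193, 19584, 21031, 21935, 22632, 23014, 23014, 23014, 23014, 23014, 23014, 23014, 23014, 23014, 23014, 23014, 23014, 23014, 23014, 23014, 23014, 23014, 23014, 23014, 23014, 23014, 23014, 23014, 23014, 23014, 23014, 23014, 23014, 23014, 23014, 23014, 23014, 23014, 23014]
def Wf3 (t : Nat) : Int := (Wt3).getD t 23014

set_option maxRecDepth 40000 in
set_option maxHeartbeats 4000000 in
lemma ptQdec : ∀ c : Nat, c < 47 → ∀ b : Nat, b < c+1 → ∀ a : Nat, a < b+1 →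
    29482*(a:ℤ) + (-174)*((a:ℤ)*(a:ℤ)) + (a:ℤ)*Wf1 ((47-a : Nat))
      + 29287*((b:ℤ)-(a:ℤ)) + (-443)*(((b:ℤ)-(a:ℤ))*(b:ℤ)) + ((b:ℤ)-(a:ℤ))*Wf2 ((47-b : Nat))
      + 61960*((c:ℤ)-(b:ℤ)) + (-1825)*(((c:ℤ)-(b:ℤ))*(c:ℤ)) + ((c:ℤ)-(b:ℤ))*Wf3 ((47-c : Nat))
      ≤ 1000000 := by decide

set_option maxRecDepth 40000 in
set_option maxHeartbeats 4000000 in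
lemma ptPdec : ∀ c : Nat, c < 47 → ∀ b : Nat, b < c+1 → ∀ a : Nat, a < b+1 →
    40199*(c:ℤ) ≤ 274576
      + (21304*(a:ℤ) + 174*((a:ℤ)*(a:ℤ)) + (a:ℤ)*Wf1 a)
      + (8466*((b:ℤ)-(a:ℤ)) + 443*(((b:ℤ)-(a:ℤ))*(b:ℤ)) + ((b:ℤ)-(a:ℤ))*Wf2 b)
      + ((-23815)*((c:ℤ)-(b:ℤ)) + 1825*(((c:ℤ)-(b:ℤ))*(c:ℤ)) + ((c:ℤ)-(b:ℤ))*Wf3 c) := by decide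

lemma wmono1 : ∀ t : Nat, t < 48 → ∀ s : Nat, s < t+1 → Wf1 s ≤ Wf1 t := by decide
lemma wmono2 : ∀ t : Nat, t < 48 → ∀ s : Nat, s < t+1 → Wf2 s ≤ Wf2 t := by decide
lemma wmono3 : ∀ t : Nat, t < 48 → ∀ s : Nat, s < t+1 → Wf3 s ≤ Wf3 t := by decide

lemma edeg_mk (E : Finset (Sym2 V)) (u v : V) :
    edeg E (s(u,v)) = deg E u + deg E v := rfl

lemma one_le_deg {E : Finset (Sym2 V)} {e : Sym2 V} {w : V} (he : e ∈ E) (hw : w ∈ e) :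
    1 ≤ deg E w :=
  Finset.card_pos.mpr ⟨e, Finset.mem_filter.mpr ⟨he, hw⟩⟩

lemma deg_union_sdiff {A B : Finset (Sym2 V)} (h : A ⊆ B) (w : V) :
    deg B w = deg A w + deg (B \ A) w := by
  unfold deg
  rw [← Finset.card_union_of_disjoint
        (Finset.disjoint_filter_filter Finset.disjoint_sdiff),
      ← Finset.filter_union, Finset.union_sdiff_of_subset h]

lemma deg_mono {A B : Finset (Sym2 V)} (h : A ⊆ B) (w : V) : deg A w ≤ deg B w :=
  Finset.card_le_card (Finset.filter_subset_filter _ h)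

lemma swap_sum (S : Finset (Sym2 V)) (R : Finset V) (f : V → ℤ) :
    ∑ e ∈ S, ∑ w ∈ R.filter (fun w => w ∈ e), f w = ∑ w ∈ R, (deg S w : ℤ) * f w := by
  calc ∑ e ∈ S, ∑ w ∈ R.filter (fun w => w ∈ e), f w
      = ∑ e ∈ S, ∑ w ∈ R, if w ∈ e then f w else 0 := by
        exact Finset.sum_congr rfl fun e _ => Finset.sum_filter _ _
    _ = ∑ w ∈ R, ∑ e ∈ S, if w ∈ e then f w else 0 := Finset.sum_comm
    _ = ∑ w ∈ R, (deg S w : ℤ) * f w := by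
        refine Finset.sum_congr rfl fun w _ => ?_
        rw [← Finset.sum_filter, Finset.sum_const, deg, nsmul_eq_mul]

lemma filter_mem_P {P Q : Finset V} (hdisj : Disjoint P Q) {u v : V}
    (hu : u ∈ P) (hv : v ∈ Q) :
    P.filter (fun w => w ∈ s(u,v)) = {u} := by
  ext w
  simp only [Finset.mem_filter, Sym2.mem_iff, Finset.mem_singleton]
  constructor
  · rintro ⟨hw, rfl | rfl⟩
    · rfl
    · exact absurd hv (Finset.disjoint_left.mp hdisj hw)
  · rintro rfl; exact ⟨hu, Or.inl rfl⟩

lemma filter_mem_Q {P Q : Finset V} (hdisj : Disjoint P Q) {u v : V}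
    (hu : u ∈ P) (hv : v ∈ Q) :
    Q.filter (fun w => w ∈ s(u,v)) = {v} := by
  ext w
  simp only [Finset.mem_filter, Sym2.mem_iff, Finset.mem_singleton]
  constructor
  · rintro ⟨hw, rfl | rfl⟩
    · exact absurd hu (Finset.disjoint_left.mp hdisj.symm hw)
    · rfl
  · rintro rfl; exact ⟨hv, Or.inr rfl⟩

lemma key_sum {P Q : Finset V} {Hs : Finset (Sym2 V)} (hdisj : Disjoint P Q)
    (hbip : ∀ e ∈ Hs, ∃ u v, e = s(u, v) ∧ u ∈ P ∧ v ∈ Q)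
    (S : Finset (Sym2 V)) (hS : S ⊆ Hs) (f g : V → ℤ) (B : ℤ)
    (hb : ∀ u v, s(u,v) ∈ S → u ∈ P → v ∈ Q → f u + g v ≤ B) :
    ∑ w ∈ P, (deg S w : ℤ) * f w + ∑ w ∈ Q, (deg S w : ℤ) * g w ≤ B * S.card := by
  rw [← swap_sum S P f, ← swap_sum S Q g, ← Finset.sum_add_distrib]
  calc ∑ e ∈ S, ((∑ w ∈ P.filter (fun w => w ∈ e), f w) + ∑ w ∈ Q.filter (fun w => w ∈ e), g w)
      ≤ ∑ _e ∈ S, B := by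
        refine Finset.sum_le_sum fun e he => ?_
        obtain ⟨u, v, rfl, hu, hv⟩ := hbip e (hS he)
        rw [filter_mem_P hdisj hu hv, filter_mem_Q hdisj hu hv,
            Finset.sum_singleton, Finset.sum_singleton]
        exact hb u v he hu hv
    _ = B * S.card := by rw [Finset.sum_const, nsmul_eq_mul, mul_comm]

lemma card_sum_P {P Q : Finset V} {Hs : Finset (Sym2 V)} (hdisj : Disjoint P Q)
    (hbip : ∀ e ∈ Hs, ∃ u v, e = s(u, v) ∧ u ∈ P ∧ v ∈ Q)
    (S : Finset (Sym2 V)) (hS : S ⊆ Hs) :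
    ∑ w ∈ P, (deg S w : ℤ) = (S.card : ℤ) := by
  have h := swap_sum S P (fun _ => (1:ℤ))
  have h2 : ∀ e ∈ S, ∑ w ∈ P.filter (fun w => w ∈ e), (1:ℤ) = 1 := by
    intro e he
    obtain ⟨u, v, rfl, hu, hv⟩ := hbip e (hS he)
    rw [filter_mem_P hdisj hu hv, Finset.sum_singleton]
  rw [Finset.sum_congr rfl h2] at h
  simpa using h.symm

lemma card_sum_Q {P Q : Finset V} {Hs : Finset (Sym2 V)} (hdisj : Disjoint P Q)
    (hbip : ∀ e ∈ Hs, ∃ u v, e = s(u, v) ∧ u ∈ P ∧ v ∈ Q)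
    (S : Finset (Sym2 V)) (hS : S ⊆ Hs) :
    ∑ w ∈ Q, (deg S w : ℤ) = (S.card : ℤ) := by
  have h := swap_sum S Q (fun _ => (1:ℤ))
  have h2 : ∀ e ∈ S, ∑ w ∈ Q.filter (fun w => w ∈ e), (1:ℤ) = 1 := by
    intro e he
    obtain ⟨u, v, rfl, hu, hv⟩ := hbip e (hS he)
    rw [filter_mem_Q hdisj hu hv, Finset.sum_singleton]
  rw [Finset.sum_congr rfl h2] at h
  simpa using h.symm

lemma step_bound {P Q : Finset V} {Hs : Finset (Sym2 V)} (hdisj : Disjoint P Q)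
    (hbip : ∀ e ∈ Hs, ∃ u v, e = s(u, v) ∧ u ∈ P ∧ v ∈ Q)
    (A B : Finset (Sym2 V)) (hAB : A ⊆ B) (hBHs : B ⊆ Hs)
    (hd : ∀ e ∈ B \ A, edeg B e ≤ 47) (w : V) :
    deg B w ≤ 46 ∨ deg B w = deg A w := by
  by_cases hne : ((B \ A).filter (fun e => w ∈ e)).Nonempty
  · left
    obtain ⟨e, hef⟩ := hne
    rw [Finset.mem_filter] at hef
    obtain ⟨heBA, hwe⟩ := hef
    have heB : e ∈ B := (Finset.mem_sdiff.mp heBA).1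
    obtain ⟨u, v, rfl, hu, hv⟩ := hbip e (hBHs heB)
    have h47 := hd _ heBA
    rw [edeg_mk] at h47
    have hdu : 1 ≤ deg B u := one_le_deg heB (Sym2.mem_mk_left u v)
    have hdv : 1 ≤ deg B v := one_le_deg heB (Sym2.mem_mk_right u v)
    rcases Sym2.mem_iff.mp hwe with rfl | rfl <;> omega
  · right
    have h0' : deg (B \ A) w = 0 := by
      rw [deg, Finset.not_nonempty_iff_eq_empty.mp hne, Finset.card_empty]
    have := deg_union_sdiff hAB w
    omega

section Wrappers
variable {V : Type*} [DecidableEq V]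

lemma ptP' (a b c : ℕ) (x1 x2 x3 : ℤ) (hx1 : x1 = (a:ℤ)) (hx2 : x2 = (b:ℤ) - (a:ℤ))
    (hx3 : x3 = (c:ℤ) - (b:ℤ)) (h1 : a ≤ b) (h2 : b ≤ c) (h3 : c ≤ 46) :
    40199*(c:ℤ) ≤ 274576
      + (21304*x1 + 174*(x1*(a:ℤ)) + x1*Wf1 a)
      + (8466*x2 + 443*(x2*(b:ℤ)) + x2*Wf2 b)
      + ((-23815)*x3 + 1825*(x3*(c:ℤ)) + x3*Wf3 c) := by
  subst hx1 hx2 hx3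
  have := ptPdec c (by omega) b (by omega) a (by omega)
  linarith

lemma ptQ' (a b c : ℕ) (x1 x2 x3 : ℤ) (hx1 : x1 = (a:ℤ)) (hx2 : x2 = (b:ℤ) - (a:ℤ))
    (hx3 : x3 = (c:ℤ) - (b:ℤ)) (h1 : a ≤ b) (h2 : b ≤ c) (h3 : c ≤ 46) :
    29482*x1 + (-174)*(x1*(a:ℤ)) + x1*Wf1 ((47-a : Nat))
      + 29287*x2 + (-443)*(x2*(b:ℤ)) + x2*Wf2 ((47-b : Nat))
      + 61960*x3 + (-1825)*(x3*(c:ℤ)) + x3*Wf3 ((47-c : Nat)) ≤ 1000000 := by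
  subst hx1 hx2 hx3
  have := ptQdec c (by omega) b (by omega) a (by omega)
  linarith

end Wrappers

/-- Every bipartite (47,3)-HEDCS `H` with vertex parts `P` and `Q`
having at least 42·|P|/2 edges satisfies |Q| ≥ 0.569·|P|. -/
theorem bipartite_hedcs_k3_beta47 {V : Type*} [DecidableEq V]
    (P Q : Finset V) (Hs : Finset (Sym2 V))
    (hH : IsBipartiteHEDCS P Q Hs 47 3)
    (hcard : (42 : ℝ) * P.card / 2 ≤ (Hs.card : ℝ)) :
    (0.569 : ℝ) * P.card ≤ (Q.card : ℝ) := by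
  unfold IsBipartiteHEDCS at hH
  obtain ⟨hdisj, hbip, H, h0, hk3, hmono, hdeg⟩ := hH
  have hsub01 : H 0 ⊆ H 1 := hmono 0 (by norm_num)
  have hsub12 : H 1 ⊆ H 2 := hmono 1 (by norm_num)
  have hsub23 : H 2 ⊆ H 3 := hmono 2 (by norm_num)
  have hH1s : H 1 ⊆ Hs := hk3 ▸ (hsub12.trans hsub23)
  have hH2s : H 2 ⊆ Hs := hk3 ▸ hsub23
  have hH3s : H 3 ⊆ Hs := hk3 ▸ Finset.Subset.refl _
  have hE1s : H 1 \ H 0 ⊆ Hs := Finset.sdiff_subset.trans hH1s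
  have hE2s : H 2 \ H 1 ⊆ Hs := Finset.sdiff_subset.trans hH2s
  have hE3s : H 3 \ H 2 ⊆ Hs := Finset.sdiff_subset.trans hH3s
  have hdeg1 : ∀ e ∈ H 1 \ H 0, edeg (H 1) e ≤ 47 := by
    have h := hdeg 1 (by norm_num) (by norm_num)
    simpa using h
  have hdeg2 : ∀ e ∈ H 2 \ H 1, edeg (H 2) e ≤ 47 := by
    have h := hdeg 2 (by norm_num) (by norm_num)
    simpa using h
  have hdeg3 : ∀ e ∈ H 3 \ H 2, edeg (H 3) e ≤ 47 := by
    have h := hdeg 3 (by norm_num) (by norm_num)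
    simpa using h
  have hdeg0 : ∀ w : V, deg (H 0) w = 0 := by
    intro w; rw [h0]; simp [deg]
  -- max degree bound
  have hd3le : ∀ w : V, deg (H 3) w ≤ 46 := by
    intro w
    rcases step_bound hdisj hbip (H 2) (H 3) hsub23 hH3s hdeg3 w with h | h
    · exact h
    rcases step_bound hdisj hbip (H 1) (H 2) hsub12 hH2s hdeg2 w with h2 | h2
    · omega
    rcases step_bound hdisj hbip (H 0) (H 1) hsub01 hH1s hdeg1 w with h1 | h1
    · omega
    · have := hdeg0 w; omega
  have hmono12 : ∀ w : V, deg (H 1) w ≤ deg (H 2) w := fun w => deg_mono hsub12 w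
  have hmono23 : ∀ w : V, deg (H 2) w ≤ deg (H 3) w := fun w => deg_mono hsub23 w
  -- increment identities
  have hxx1 : ∀ w : V, ((deg (H 1 \ H 0) w : ℤ)) = ((deg (H 1) w : ℤ)) := by
    intro w; have := deg_union_sdiff hsub01 w; have := hdeg0 w; omega
  have hxx2 : ∀ w : V, ((deg (H 2 \ H 1) w : ℤ)) = ((deg (H 2) w : ℤ)) - ((deg (H 1) w : ℤ)) := by
    intro w; have := deg_union_sdiff hsub12 w; omega
  have hxx3 : ∀ w : V, ((deg (H 3 \ H 2) w : ℤ)) = ((deg (H 3) w : ℤ)) - ((deg (H 2) w : ℤ)) := by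
    intro w; have := deg_union_sdiff hsub23 w; omega
  -- pointwise inequalities
  have hptP : ∀ w : V,
      40199*((deg (H 3) w : ℤ)) ≤ 274576
        + (21304*((deg (H 1 \ H 0) w : ℤ)) + 174*(((deg (H 1 \ H 0) w : ℤ))*((deg (H 1) w : ℤ)))
            + ((deg (H 1 \ H 0) w : ℤ))*Wf1 (deg (H 1) w))
        + (8466*((deg (H 2 \ H 1) w : ℤ)) + 443*(((deg (H 2 \ H 1) w : ℤ))*((deg (H 2) w : ℤ)))
            + ((deg (H 2 \ H 1) w : ℤ))*Wf2 (deg (H 2) w))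
        + ((-23815)*((deg (H 3 \ H 2) w : ℤ)) + 1825*(((deg (H 3 \ H 2) w : ℤ))*((deg (H 3) w : ℤ)))
            + ((deg (H 3 \ H 2) w : ℤ))*Wf3 (deg (H 3) w)) := by
    intro w
    exact ptP' (deg (H 1) w) (deg (H 2) w) (deg (H 3) w) _ _ _
      (hxx1 w) (hxx2 w) (hxx3 w) (hmono12 w) (hmono23 w) (hd3le w)
  have hptQ : ∀ w : V,
      29482*((deg (H 1 \ H 0) w : ℤ)) + (-174)*(((deg (H 1 \ H 0) w : ℤ))*((deg (H 1) w : ℤ)))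
          + ((deg (H 1 \ H 0) w : ℤ))*Wf1 ((47 - deg (H 1) w : Nat))
        + 29287*((deg (H 2 \ H 1) w : ℤ)) + (-443)*(((deg (H 2 \ H 1) w : ℤ))*((deg (H 2) w : ℤ)))
          + ((deg (H 2 \ H 1) w : ℤ))*Wf2 ((47 - deg (H 2) w : Nat))
        + 61960*((deg (H 3 \ H 2) w : ℤ)) + (-1825)*(((deg (H 3 \ H 2) w : ℤ))*((deg (H 3) w : ℤ)))
          + ((deg (H 3 \ H 2) w : ℤ))*Wf3 ((47 - deg (H 3) w : Nat)) ≤ 1000000 := by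
    intro w
    exact ptQ' (deg (H 1) w) (deg (H 2) w) (deg (H 3) w) _ _ _
      (hxx1 w) (hxx2 w) (hxx3 w) (hmono12 w) (hmono23 w) (hd3le w)
  -- summed pointwise inequalities
  have HP0 := Finset.sum_le_sum (fun w (_ : w ∈ P) => hptP w)
  have HQ0 := Finset.sum_le_sum (fun w (_ : w ∈ Q) => hptQ w)
  -- expansions
  have HPL : ∑ w ∈ P, (40199*((deg (H 3) w : ℤ))) = 40199*((Hs.card : ℤ)) := by
    rw [← Finset.mul_sum, card_sum_P hdisj hbip (H 3) hH3s, hk3]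
  have HPR : ∑ w ∈ P, (274576
        + (21304*((deg (H 1 \ H 0) w : ℤ)) + 174*(((deg (H 1 \ H 0) w : ℤ))*((deg (H 1) w : ℤ)))
            + ((deg (H 1 \ H 0) w : ℤ))*Wf1 (deg (H 1) w))
        + (8466*((deg (H 2 \ H 1) w : ℤ)) + 443*(((deg (H 2 \ H 1) w : ℤ))*((deg (H 2) w : ℤ)))
            + ((deg (H 2 \ H 1) w : ℤ))*Wf2 (deg (H 2) w))
        + ((-23815)*((deg (H 3 \ H 2) w : ℤ)) + 1825*(((deg (H 3 \ H 2) w : ℤ))*((deg (H 3) w : ℤ)))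
            + ((deg (H 3 \ H 2) w : ℤ))*Wf3 (deg (H 3) w)))
      = 274576*((P.card : ℤ))
        + 21304*(∑ w ∈ P, ((deg (H 1 \ H 0) w : ℤ)))
        + 174*(∑ w ∈ P, ((deg (H 1 \ H 0) w : ℤ))*((deg (H 1) w : ℤ)))
        + (∑ w ∈ P, ((deg (H 1 \ H 0) w : ℤ))*Wf1 (deg (H 1) w))
        + 8466*(∑ w ∈ P, ((deg (H 2 \ H 1) w : ℤ)))
        + 443*(∑ w ∈ P, ((deg (H 2 \ H 1) w : ℤ))*((deg (H 2) w : ℤ)))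
        + (∑ w ∈ P, ((deg (H 2 \ H 1) w : ℤ))*Wf2 (deg (H 2) w))
        + (-23815)*(∑ w ∈ P, ((deg (H 3 \ H 2) w : ℤ)))
        + 1825*(∑ w ∈ P, ((deg (H 3 \ H 2) w : ℤ))*((deg (H 3) w : ℤ)))
        + (∑ w ∈ P, ((deg (H 3 \ H 2) w : ℤ))*Wf3 (deg (H 3) w)) := by
    simp only [Finset.sum_add_distrib, Finset.sum_const, nsmul_eq_mul, ← Finset.mul_sum]
    ring
  have HQR : ∑ w ∈ Q, (29482*((deg (H 1 \ H 0) w : ℤ)) + (-174)*(((deg (H 1 \ H 0) w : ℤ))*((deg (H 1) w : ℤ)))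
          + ((deg (H 1 \ H 0) w : ℤ))*Wf1 ((47 - deg (H 1) w : Nat))
        + 29287*((deg (H 2 \ H 1) w : ℤ)) + (-443)*(((deg (H 2 \ H 1) w : ℤ))*((deg (H 2) w : ℤ)))
          + ((deg (H 2 \ H 1) w : ℤ))*Wf2 ((47 - deg (H 2) w : Nat))
        + 61960*((deg (H 3 \ H 2) w : ℤ)) + (-1825)*(((deg (H 3 \ H 2) w : ℤ))*((deg (H 3) w : ℤ)))
          + ((deg (H 3 \ H 2) w : ℤ))*Wf3 ((47 - deg (H 3) w : Nat)))
      = 29482*(∑ w ∈ Q, ((deg (H 1 \ H 0) w : ℤ)))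
        + (-174)*(∑ w ∈ Q, ((deg (H 1 \ H 0) w : ℤ))*((deg (H 1) w : ℤ)))
        + (∑ w ∈ Q, ((deg (H 1 \ H 0) w : ℤ))*Wf1 ((47 - deg (H 1) w : Nat)))
        + 29287*(∑ w ∈ Q, ((deg (H 2 \ H 1) w : ℤ)))
        + (-443)*(∑ w ∈ Q, ((deg (H 2 \ H 1) w : ℤ))*((deg (H 2) w : ℤ)))
        + (∑ w ∈ Q, ((deg (H 2 \ H 1) w : ℤ))*Wf2 ((47 - deg (H 2) w : Nat)))
        + 61960*(∑ w ∈ Q, ((deg (H 3 \ H 2) w : ℤ)))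
        + (-1825)*(∑ w ∈ Q, ((deg (H 3 \ H 2) w : ℤ))*((deg (H 3) w : ℤ)))
        + (∑ w ∈ Q, ((deg (H 3 \ H 2) w : ℤ))*Wf3 ((47 - deg (H 3) w : Nat))) := by
    simp only [Finset.sum_add_distrib, ← Finset.mul_sum]
  have HQL : ∑ _w ∈ Q, (1000000:ℤ) = 1000000*((Q.card : ℤ)) := by
    rw [Finset.sum_const, nsmul_eq_mul, mul_comm]
  -- consistency facts
  have F1P1 := card_sum_P hdisj hbip (H 1 \ H 0) hE1s
  have F1P2 := card_sum_P hdisj hbip (H 2 \ H 1) hE2s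
  have F1P3 := card_sum_P hdisj hbip (H 3 \ H 2) hE3s
  have F1Q1 := card_sum_Q hdisj hbip (H 1 \ H 0) hE1s
  have F1Q2 := card_sum_Q hdisj hbip (H 2 \ H 1) hE2s
  have F1Q3 := card_sum_Q hdisj hbip (H 3 \ H 2) hE3s
  -- level edge-degree facts
  have F2_1 : ∑ w ∈ P, ((deg (H 1 \ H 0) w : ℤ)) * ((deg (H 1) w : ℤ))
      + ∑ w ∈ Q, ((deg (H 1 \ H 0) w : ℤ)) * ((deg (H 1) w : ℤ)) ≤ 47*(((H 1 \ H 0).card : ℤ)) := by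
    refine key_sum hdisj hbip _ hE1s _ _ 47 ?_
    intro u v he hu hv
    have h47 := hdeg1 _ he
    rw [edeg_mk] at h47
    push_cast
    omega
  have F2_2 : ∑ w ∈ P, ((deg (H 2 \ H 1) w : ℤ)) * ((deg (H 2) w : ℤ))
      + ∑ w ∈ Q, ((deg (H 2 \ H 1) w : ℤ)) * ((deg (H 2) w : ℤ)) ≤ 47*(((H 2 \ H 1).card : ℤ)) := by
    refine key_sum hdisj hbip _ hE2s _ _ 47 ?_
    intro u v he hu hv
    have h47 := hdeg2 _ he
    rw [edeg_mk] at h47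
    push_cast
    omega
  have F2_3 : ∑ w ∈ P, ((deg (H 3 \ H 2) w : ℤ)) * ((deg (H 3) w : ℤ))
      + ∑ w ∈ Q, ((deg (H 3 \ H 2) w : ℤ)) * ((deg (H 3) w : ℤ)) ≤ 47*(((H 3 \ H 2).card : ℤ)) := by
    refine key_sum hdisj hbip _ hE3s _ _ 47 ?_
    intro u v he hu hv
    have h47 := hdeg3 _ he
    rw [edeg_mk] at h47
    push_cast
    omega
  -- cut facts
  have F3_1 : ∑ w ∈ P, ((deg (H 1 \ H 0) w : ℤ)) * Wf1 (deg (H 1) w)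
      ≤ ∑ w ∈ Q, ((deg (H 1 \ H 0) w : ℤ)) * Wf1 ((47 - deg (H 1) w : Nat)) := by
    have hk := key_sum hdisj hbip _ hE1s (fun w => Wf1 (deg (H 1) w))
      (fun w => -(Wf1 ((47 - deg (H 1) w : Nat)))) 0 ?_
    · simp only [mul_neg, Finset.sum_neg_distrib, zero_mul] at hk
      linarith
    intro u v he hu hv
    have h47 := hdeg1 _ he
    rw [edeg_mk] at h47
    have heB : s(u,v) ∈ H 1 := (Finset.mem_sdiff.mp he).1
    have hdv : 1 ≤ deg (H 1) v := one_le_deg heB (Sym2.mem_mk_right u v)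
    have hw := wmono1 (47 - deg (H 1) v) (by omega) (deg (H 1) u) (by omega)
    exact (by linarith : Wf1 (deg (H 1) u) + -(Wf1 ((47 - deg (H 1) v : Nat))) ≤ (0:ℤ))
  have F3_2 : ∑ w ∈ P, ((deg (H 2 \ H 1) w : ℤ)) * Wf2 (deg (H 2) w)
      ≤ ∑ w ∈ Q, ((deg (H 2 \ H 1) w : ℤ)) * Wf2 ((47 - deg (H 2) w : Nat)) := by
    have hk := key_sum hdisj hbip _ hE2s (fun w => Wf2 (deg (H 2) w))
      (fun w => -(Wf2 ((47 - deg (H 2) w : Nat)))) 0 ?_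
    · simp only [mul_neg, Finset.sum_neg_distrib, zero_mul] at hk
      linarith
    intro u v he hu hv
    have h47 := hdeg2 _ he
    rw [edeg_mk] at h47
    have heB : s(u,v) ∈ H 2 := (Finset.mem_sdiff.mp he).1
    have hdv : 1 ≤ deg (H 2) v := one_le_deg heB (Sym2.mem_mk_right u v)
    have hw := wmono2 (47 - deg (H 2) v) (by omega) (deg (H 2) u) (by omega)
    exact (by linarith : Wf2 (deg (H 2) u) + -(Wf2 ((47 - deg (H 2) v : Nat))) ≤ (0:ℤ))
  have F3_3 : ∑ w ∈ P, ((deg (H 3 \ H 2) w : ℤ)) * Wf3 (deg (H 3) w)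
      ≤ ∑ w ∈ Q, ((deg (H 3 \ H 2) w : ℤ)) * Wf3 ((47 - deg (H 3) w : Nat)) := by
    have hk := key_sum hdisj hbip _ hE3s (fun w => Wf3 (deg (H 3) w))
      (fun w => -(Wf3 ((47 - deg (H 3) w : Nat)))) 0 ?_
    · simp only [mul_neg, Finset.sum_neg_distrib, zero_mul] at hk
      linarith
    intro u v he hu hv
    have h47 := hdeg3 _ he
    rw [edeg_mk] at h47
    have heB : s(u,v) ∈ H 3 := (Finset.mem_sdiff.mp he).1
    have hdv : 1 ≤ deg (H 3) v := one_le_deg heB (Sym2.mem_mk_right u v)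
    have hw := wmono3 (47 - deg (H 3) v) (by omega) (deg (H 3) u) (by omega)
    exact (by linarith : Wf3 (deg (H 3) u) + -(Wf3 ((47 - deg (H 3) v : Nat))) ≤ (0:ℤ))
  -- master integer inequality
  have MAIN : 40199*((Hs.card : ℤ)) ≤ 274576*((P.card : ℤ)) + 1000000*((Q.card : ℤ)) := by
    rw [HPL, HPR] at HP0
    rw [HQR, HQL] at HQ0
    linarith [F1P1, F1P2, F1P3, F1Q1, F1Q2, F1Q3, F2_1, F2_2, F2_3, F3_1, F3_2, F3_3]
  have MAINR : (40199:ℝ)*((Hs.card : ℝ)) ≤ 274576*((P.card : ℝ)) + 1000000*((Q.card : ℝ)) := by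
    exact_mod_cast MAIN
  linarith
end

section
/- Let k ≥ 1 and β ≥ 2 be integers, let G be a (not necessarily bipartite) graph on vertex set V, let H be a (β,k)-HEDCS of G with hierarchical decomposition ∅ = H_0 ⊆ H_1 ⊆ … ⊆ H_k = H, and let M be a matching of G. Then there exists a partition V = L ⊔ R such that: (a) every edge of M has one endpoint in L and one endpoint in R; and (b) for every vertex v ∈ V and every i ∈ [k], |deg_{H̃_i}(v) − deg_{H_i}(v)/2| < 6·√(β·ln(kβ)) + 1, where H̃_i denotes the set of edges of H_i having one endpoint in L and one endpoint in R. -/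
/-!
Give the two endpoints of every matching edge opposite colours decided by one fair coin per pair
(an unmatched vertex gets a coin of its own). Every level `H_i` of the hierarchy has maximum degree
below `β`, so `2 deg_{H̃_i}(v) - deg_{H_i}(v)` is, up to sign, a sum of independent coin signs whose
coefficients have total square at most `2β`, and Hoeffding's bound makes it exceed
`12 √(β ln(kβ))` with probability at most `2 (kβ)⁻³⁶`. Such a bad event shares coins with at most
`2β²k` others, so the symmetric Lovász Local Lemma yields a colouring avoiding all of them.
Probabilities are counted on the cube of coin assignments `I → Bool`.
-/


open Finset

variable {V : Type*} [DecidableEq V]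

section LocalLemma

variable {I : Type*} [Fintype I] [DecidableEq I]

theorem card_inter_mul_two_pow_of_dependsOn {S T : Finset I} {A B : Finset (I → Bool)}
    (hA : DependsOn (· ∈ A) (S : Set I)) (hB : DependsOn (· ∈ B) (T : Set I))
    (hST : Disjoint S T) :
    #(A ∩ B) * 2 ^ Fintype.card I = #A * #B := by
  have hSA {ω τ : I → Bool} (hω : ω ∈ A) : S.piecewise ω τ ∈ A :=
    (hA fun i hi => (S.piecewise_eq_of_mem _ _ (Finset.mem_coe.1 hi)).symm).mp hω
  have hTB {ω τ : I → Bool} (hω : ω ∈ B) : S.piecewise τ ω ∈ B :=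
    (hB fun i hi => (S.piecewise_eq_of_notMem _ _
      (Finset.disjoint_right.1 hST (Finset.mem_coe.1 hi))).symm).mp hω
  have swap_swap (p : (I → Bool) × (I → Bool)) :
      (S.piecewise (S.piecewise p.1 p.2) (S.piecewise p.2 p.1),
        S.piecewise (S.piecewise p.2 p.1) (S.piecewise p.1 p.2)) = p := by
    ext i <;> by_cases hi : i ∈ S <;> simp [hi]
  -- swapping the coordinates outside `S` is a bijection `(A ∩ B) × univ ≃ A × B`
  have key : #((A ∩ B) ×ˢ (univ : Finset (I → Bool))) = #(A ×ˢ B) := by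
    refine Finset.card_nbij' (fun p => (S.piecewise p.1 p.2, S.piecewise p.2 p.1))
      (fun p => (S.piecewise p.1 p.2, S.piecewise p.2 p.1)) ?_ ?_
      (fun p _ => swap_swap p) (fun p _ => swap_swap p)
    · rintro ⟨ω, τ⟩ hp
      simp only [Finset.coe_product, Set.mem_prod, Finset.mem_coe, Finset.mem_inter] at hp ⊢
      exact ⟨hSA hp.1.1, hTB hp.1.2⟩
    · rintro ⟨ω, τ⟩ hp
      simp only [Finset.coe_product, Set.mem_prod, Finset.mem_coe, Finset.mem_inter,
        Finset.mem_univ, and_true] at hp ⊢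
      exact ⟨hSA hp.1, hTB hp.2⟩
  simpa [Finset.card_product, Fintype.card_fun] using key

variable {ι : Type*} (E : ι → Finset (I → Bool))

def avoid (T : Finset ι) : Finset (I → Bool) := {ω | ∀ j ∈ T, ω ∉ E j}

@[simp]
theorem avoid_empty : avoid E ∅ = univ := by simp [avoid]

theorem avoid_anti {T T' : Finset ι} (h : T ⊆ T') : avoid E T' ⊆ avoid E T := by
  intro ω; simp only [avoid, Finset.mem_filter, Finset.mem_univ, true_and]
  exact fun hω j hj => hω j (h hj)

theorem dependsOn_mem_avoid {S : ι → Finset I} {T : Finset ι}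
    (hE : ∀ j ∈ T, DependsOn (· ∈ E j) (S j : Set I)) :
    DependsOn (· ∈ avoid E T) (T.biUnion S : Set I) := by
  intro ω ω' h
  simp only [avoid, Finset.mem_filter, Finset.mem_univ, true_and, eq_iff_iff]
  refine forall₂_congr fun j hj => not_congr (eq_iff_iff.1 (hE j hj fun i hi => h i ?_))
  simpa using ⟨j, hj, hi⟩

theorem card_inter_avoid_le_of_disjoint {S : ι → Finset I} {x : ℝ} {D : ℕ} {j : ι}
    {T T' : Finset ι} (hx0 : 0 ≤ x) (hEj : DependsOn (· ∈ E j) (S j : Set I))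
    (hE : ∀ j' ∈ T', DependsOn (· ∈ E j') (S j' : Set I))
    (hdisj : ∀ j' ∈ T', Disjoint (S j) (S j')) (hT' : T' ⊆ T)
    (hp : (#(E j) : ℝ) ≤ x * (1 - x) ^ D * 2 ^ Fintype.card I)
    (hT : (1 - x) ^ D * #(avoid E T') ≤ #(avoid E T)) :
    (#(E j ∩ avoid E T) : ℝ) ≤ x * #(avoid E T) := by
  have hindep : (#(E j ∩ avoid E T') : ℝ) * 2 ^ Fintype.card I = #(E j) * #(avoid E T') := by
    exact_mod_cast card_inter_mul_two_pow_of_dependsOn hEj (dependsOn_mem_avoid E hE)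
      ((Finset.disjoint_biUnion_right _ _ _).2 hdisj)
  refine le_of_mul_le_mul_right ?_ (by positivity : (0 : ℝ) < 2 ^ Fintype.card I)
  calc (#(E j ∩ avoid E T) : ℝ) * 2 ^ Fintype.card I
      ≤ #(E j ∩ avoid E T') * 2 ^ Fintype.card I := by gcongr; exact avoid_anti E hT'
    _ = #(E j) * #(avoid E T') := hindep
    _ ≤ x * (1 - x) ^ D * 2 ^ Fintype.card I * #(avoid E T') := by gcongr
    _ = x * 2 ^ Fintype.card I * ((1 - x) ^ D * #(avoid E T')) := by ring
    _ ≤ x * 2 ^ Fintype.card I * #(avoid E T) := by gcongr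
    _ = x * #(avoid E T) * 2 ^ Fintype.card I := by ring

variable [DecidableEq ι]

theorem avoid_insert (a : ι) (T : Finset ι) : avoid E (insert a T) = avoid E T \ E a := by
  ext ω; simp [avoid, and_comm]

theorem one_sub_mul_card_avoid_le {x : ℝ} {a : ι} {T : Finset ι}
    (h : (#(E a ∩ avoid E T) : ℝ) ≤ x * #(avoid E T)) :
    (1 - x) * #(avoid E T) ≤ #(avoid E (insert a T)) := by
  have hsplit := Finset.card_sdiff_add_card_inter (avoid E T) (E a)
  rw [Finset.inter_comm] at hsplit
  rw [avoid_insert]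
  have : (#(avoid E T \ E a) : ℝ) + #(E a ∩ avoid E T) = #(avoid E T) := by exact_mod_cast hsplit
  linarith

theorem pow_mul_card_avoid_le {x : ℝ} (hx : x ≤ 1) (T s : Finset ι)
    (h : ∀ a ∈ s, ∀ s' ⊆ s.erase a,
      (#(E a ∩ avoid E (T ∪ s')) : ℝ) ≤ x * #(avoid E (T ∪ s'))) :
    (1 - x) ^ #s * #(avoid E T) ≤ #(avoid E (T ∪ s)) := by
  induction s using Finset.induction_on with
  | empty => simp
  | insert a s ha ih =>
    have ih' := ih fun b hb s' hs' => h b (Finset.mem_insert_of_mem hb) s'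
      (hs'.trans (Finset.erase_subset_erase _ (Finset.subset_insert _ _)))
    have hstep := one_sub_mul_card_avoid_le E
      (h a (Finset.mem_insert_self a s) s (by rw [Finset.erase_insert ha]))
    rw [Finset.union_insert, Finset.card_insert_of_notMem ha, pow_succ']
    calc (1 - x) * (1 - x) ^ #s * #(avoid E T)
        = (1 - x) * ((1 - x) ^ #s * #(avoid E T)) := by ring
      _ ≤ (1 - x) * #(avoid E (T ∪ s)) := mul_le_mul_of_nonneg_left ih' (by linarith)
      _ ≤ _ := hstep

variable {E} {S : ι → Finset I} {J : Finset ι} {x : ℝ} {D : ℕ}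

theorem card_inter_avoid_le (hE : ∀ j ∈ J, DependsOn (· ∈ E j) (S j : Set I))
    (hx0 : 0 ≤ x) (hx1 : x ≤ 1)
    (hp : ∀ j ∈ J, (#(E j) : ℝ) ≤ x * (1 - x) ^ D * 2 ^ Fintype.card I)
    (hdep : ∀ j ∈ J, #{j' ∈ J | j' ≠ j ∧ ¬Disjoint (S j) (S j')} ≤ D) :
    ∀ T ⊆ J, ∀ j ∈ J, (#(E j ∩ avoid E T) : ℝ) ≤ x * #(avoid E T) := by
  intro T
  induction T using Finset.strongInduction with
  | H T ih =>
  intro hTJ j hj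
  by_cases hjT : j ∈ T
  · have : E j ∩ avoid E T = ∅ := by
      ext ω; simp only [avoid, Finset.mem_inter, Finset.mem_filter, Finset.mem_univ, true_and,
        Finset.notMem_empty, iff_false, not_and]
      exact fun hω h => h j hjT hω
    rw [this, Finset.card_empty, Nat.cast_zero]
    positivity
  set T₁ := T.filter fun j' => ¬Disjoint (S j) (S j')
  set T₂ := T.filter fun j' => Disjoint (S j) (S j')
  have hT : T₂ ∪ T₁ = T := Finset.filter_union_filter_not_eq _ _
  have hT₁ : #T₁ ≤ D := (Finset.card_le_card fun j' hj' => by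
    simp only [T₁, Finset.mem_filter] at hj' ⊢
    exact ⟨hTJ hj'.1, fun h => hjT (h ▸ hj'.1), hj'.2⟩).trans (hdep j hj)
  -- conditioning on avoiding `T₂`, the events of `T₁` shrink the probability by at most
  -- a factor `(1 - x) ^ D`
  refine card_inter_avoid_le_of_disjoint E hx0 (hE j hj)
    (fun j' hj' => hE j' (hTJ (Finset.filter_subset _ _ hj')))
    (fun j' hj' => (Finset.mem_filter.1 hj').2)
    (Finset.filter_subset _ _) (hp j hj) ?_
  refine le_trans ?_ (hT ▸ pow_mul_card_avoid_le E hx1 T₂ T₁ fun a ha s' hs' => ?_)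
  · exact mul_le_mul_of_nonneg_right (pow_le_pow_of_le_one (by linarith) (by linarith) hT₁)
      (Nat.cast_nonneg _)
  · have haT : a ∈ T := Finset.filter_subset _ _ ha
    have hsub : T₂ ∪ s' ⊆ T :=
      Finset.union_subset (Finset.filter_subset _ _)
        (hs'.trans ((Finset.erase_subset _ _).trans (Finset.filter_subset _ _)))
    refine ih _ ((Finset.ssubset_iff_of_subset hsub).2 ⟨a, haT, ?_⟩) (hsub.trans hTJ) a (hTJ haT)
    rw [Finset.mem_union, not_or]
    exact ⟨fun h => (Finset.mem_filter.1 ha).2 (Finset.mem_filter.1 h).2,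
      fun h => Finset.notMem_erase a _ (hs' h)⟩

theorem lovasz_local_lemma (hE : ∀ j ∈ J, DependsOn (· ∈ E j) (S j : Set I))
    (hx0 : 0 ≤ x) (hx1 : x < 1)
    (hp : ∀ j ∈ J, (#(E j) : ℝ) ≤ x * (1 - x) ^ D * 2 ^ Fintype.card I)
    (hdep : ∀ j ∈ J, #{j' ∈ J | j' ≠ j ∧ ¬Disjoint (S j) (S j')} ≤ D) :
    ∃ ω : I → Bool, ∀ j ∈ J, ω ∉ E j := by
  have hclaim := card_inter_avoid_le hE hx0 hx1.le hp hdep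
  have hpeel := pow_mul_card_avoid_le E hx1.le ∅ J fun a ha s' hs' =>
    hclaim _ (by simpa using hs'.trans (Finset.erase_subset a J)) a ha
  simp only [avoid_empty, Finset.empty_union, Finset.card_univ, Fintype.card_fun,
    Fintype.card_bool, Nat.cast_pow, Nat.cast_ofNat] at hpeel
  have hpos : (0 : ℝ) < #(avoid E J) := lt_of_lt_of_le (by have := sub_pos.2 hx1; positivity) hpeel
  obtain ⟨ω, hω⟩ := Finset.card_pos.1 (by exact_mod_cast hpos)
  exact ⟨ω, by simpa [avoid] using hω⟩

theorem lovasz_local_lemma_symmetric (hE : ∀ j ∈ J, DependsOn (· ∈ E j) (S j : Set I))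
    (hp : ∀ j ∈ J, 4 * (D + 1) * (#(E j) : ℝ) ≤ 2 ^ Fintype.card I)
    (hdep : ∀ j ∈ J, #{j' ∈ J | j' ≠ j ∧ ¬Disjoint (S j) (S j')} ≤ D) :
    ∃ ω : I → Bool, ∀ j ∈ J, ω ∉ E j := by
  set x : ℝ := 1 / (2 * (D + 1))
  have hx0 : 0 < x := by positivity
  have hx12 : x ≤ 1 / 2 := by
    rw [div_le_div_iff₀ (by positivity) (by norm_num)]; linarith
  -- Bernoulli: `(1 - x) ^ D ≥ 1 - D x ≥ 1 / 2`
  have hhalf : (1 : ℝ) / 2 ≤ (1 - x) ^ D := by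
    have hDx : D * x ≤ 1 / 2 := by
      rw [mul_one_div, div_le_div_iff₀ (by positivity) (by norm_num)]; linarith
    have := one_add_mul_le_pow (a := -x) (by linarith) D
    rw [← sub_eq_add_neg] at this
    linarith
  refine lovasz_local_lemma hE hx0.le (by linarith) (fun j hj => ?_) hdep
  calc (#(E j) : ℝ) ≤ 2 ^ Fintype.card I / (4 * (D + 1)) := by
        rw [le_div_iff₀ (by positivity)]; linarith [hp j hj]
    _ = x * (1 / 2) * 2 ^ Fintype.card I := by simp only [x]; field_simp; ring
    _ ≤ x * (1 - x) ^ D * 2 ^ Fintype.card I := by gcongr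

end LocalLemma

section Hoeffding

open Real

variable {I : Type*} [Fintype I] [DecidableEq I]

def boolSign (b : Bool) : ℝ := if b then 1 else -1

theorem sum_exp_mul_sum_boolSign_le (a : I → ℝ) (l : ℝ) :
    ∑ ω : I → Bool, exp (l * ∑ i, a i * boolSign (ω i))
      ≤ 2 ^ Fintype.card I * exp (l ^ 2 * (∑ i, a i ^ 2) / 2) := by
  have hfactor (ω : I → Bool) :
      exp (l * ∑ i, a i * boolSign (ω i)) = ∏ i, exp (l * a i * boolSign (ω i)) := by
    rw [Finset.mul_sum, Real.exp_sum]; simp only [mul_assoc]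
  -- each coordinate contributes `2 cosh (l a_i) ≤ 2 exp ((l a_i)² / 2)`
  have hcoord (i : I) : ∑ b : Bool, exp (l * a i * boolSign b) ≤ 2 * exp ((l * a i) ^ 2 / 2) := by
    have := Real.cosh_le_exp_half_sq (l * a i)
    rw [Real.cosh_eq] at this
    simp only [Fintype.sum_bool, boolSign, if_true, Bool.false_eq_true, if_false, mul_one, mul_neg]
    linarith
  calc ∑ ω : I → Bool, exp (l * ∑ i, a i * boolSign (ω i))
      = ∏ i, ∑ b : Bool, exp (l * a i * boolSign b) := by
        simp only [hfactor, Fintype.prod_sum]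
    _ ≤ ∏ i, (2 * exp ((l * a i) ^ 2 / 2)) :=
        Finset.prod_le_prod (fun i _ => by positivity) fun i _ => hcoord i
    _ = 2 ^ Fintype.card I * exp (l ^ 2 * (∑ i, a i ^ 2) / 2) := by
        rw [Finset.prod_mul_distrib, Finset.prod_const, Finset.card_univ, ← Real.exp_sum,
          Finset.mul_sum, Finset.sum_div]
        simp only [mul_pow]

theorem card_le_sum_mul_boolSign_le (a : I → ℝ) {t m : ℝ} (ht : 0 ≤ t) (hm : 0 < m)
    (ha : ∑ i, a i ^ 2 ≤ m) :
    (#{ω : I → Bool | t ≤ ∑ i, a i * boolSign (ω i)} : ℝ)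
      ≤ 2 ^ Fintype.card I * exp (-t ^ 2 / (2 * m)) := by
  set l := t / m
  set F : Finset (I → Bool) := {ω | t ≤ ∑ i, a i * boolSign (ω i)}
  have hl : 0 ≤ l := by positivity
  have hmarkov : (#F : ℝ) * exp (l * t) ≤ 2 ^ Fintype.card I * exp (l ^ 2 * m / 2) :=
    calc (#F : ℝ) * exp (l * t) = ∑ ω ∈ F, exp (l * t) := by
          rw [Finset.sum_const, nsmul_eq_mul]
      _ ≤ ∑ ω ∈ F, exp (l * ∑ i, a i * boolSign (ω i)) :=
          Finset.sum_le_sum fun ω hω => exp_le_exp.2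
            (mul_le_mul_of_nonneg_left (Finset.mem_filter.1 hω).2 hl)
      _ ≤ ∑ ω : I → Bool, exp (l * ∑ i, a i * boolSign (ω i)) :=
          Finset.sum_le_sum_of_subset_of_nonneg (Finset.subset_univ F) fun _ _ _ => by positivity
      _ ≤ 2 ^ Fintype.card I * exp (l ^ 2 * (∑ i, a i ^ 2) / 2) :=
          sum_exp_mul_sum_boolSign_le a l
      _ ≤ 2 ^ Fintype.card I * exp (l ^ 2 * m / 2) := by gcongr
  have hexp : exp (l ^ 2 * m / 2) = exp (-t ^ 2 / (2 * m)) * exp (l * t) := by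
    rw [← Real.exp_add]; congr 1; simp only [l]; field_simp; ring
  rw [hexp, ← mul_assoc] at hmarkov
  exact le_of_mul_le_mul_right hmarkov (exp_pos _)

theorem card_le_abs_sum_mul_boolSign_le (a : I → ℝ) {t m : ℝ} (ht : 0 ≤ t) (hm : 0 < m)
    (ha : ∑ i, a i ^ 2 ≤ m) :
    (#{ω : I → Bool | t ≤ |∑ i, a i * boolSign (ω i)|} : ℝ)
      ≤ 2 * (2 ^ Fintype.card I * exp (-t ^ 2 / (2 * m))) := by
  have hsub : ({ω : I → Bool | t ≤ |∑ i, a i * boolSign (ω i)|} : Finset _)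
      ⊆ ({ω : I → Bool | t ≤ ∑ i, a i * boolSign (ω i)} : Finset _)
        ∪ ({ω : I → Bool | t ≤ ∑ i, -a i * boolSign (ω i)} : Finset _) := by
    intro ω
    simp only [Finset.mem_filter, Finset.mem_univ, true_and, Finset.mem_union, neg_mul,
      Finset.sum_neg_distrib]
    exact le_abs.1
  have h₁ := card_le_sum_mul_boolSign_le a ht hm ha
  have h₂ := card_le_sum_mul_boolSign_le (fun i => -a i) ht hm (by simpa using ha)
  have hcard := (Finset.card_le_card hsub).trans (Finset.card_union_le _ _)
  rw [← Nat.cast_le (α := ℝ), Nat.cast_add] at hcard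
  linarith

end Hoeffding

section PairColouring

open Real

theorem boolSign_xor (a b : Bool) : boolSign (xor a b) = boolSign a * boolSign (!b) := by
  cases a <;> cases b <;> simp [boolSign]

theorem abs_two_mul_card_filter_ne_sub_card {α : Type*} (χ : α → Bool) (b : Bool)
    (N : Finset α) :
    |2 * (#{u ∈ N | χ u ≠ b} : ℝ) - #N| = |∑ u ∈ N, boolSign (χ u)| := by
  have hsum : ∑ u ∈ N, boolSign (χ u) = #{u ∈ N | χ u = true} - #{u ∈ N | ¬χ u = true} := by
    simp only [boolSign, Finset.sum_ite, Finset.sum_const, nsmul_eq_mul, mul_one, mul_neg]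
    ring
  have hN : (#{u ∈ N | χ u = true} : ℝ) + #{u ∈ N | ¬χ u = true} = #N := by
    exact_mod_cast Finset.card_filter_add_card_filter_not (s := N) fun u => χ u = true
  cases b
  · simp only [ne_eq, Bool.not_eq_false] at hsum ⊢
    rw [hsum, ← hN]; ring_nf
  · simp only [ne_eq] at hsum ⊢
    rw [hsum, ← hN, ← abs_neg]; ring_nf

variable {α : Type*}

def pairColouring (m : α → α) (τ : α → Bool) (ω : Sym2 α → Bool) (u : α) : Bool :=
  xor (ω s(u, m u)) (τ u)

theorem pairColouring_apply_of_involutive {m : α → α} {τ : α → Bool} (hm : Function.Involutive m)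
    {u : α}
    (hτ : τ (m u) = !τ u) (ω : Sym2 α → Bool) :
    pairColouring m τ ω (m u) = !pairColouring m τ ω u := by
  simp only [pairColouring, hm u, Sym2.eq_swap, hτ, Bool.xor_not]

theorem card_filter_pair_eq_le_two (m : V → V) (N : Finset V) (q : Sym2 V) :
    #{u ∈ N | s(u, m u) = q} ≤ 2 := by
  by_cases h : ∃ u ∈ N, s(u, m u) = q
  · obtain ⟨u, -, rfl⟩ := h
    refine (Finset.card_le_card (t := {u, m u}) fun w hw => ?_).trans Finset.card_le_two
    rcases Sym2.eq_iff.1 (Finset.mem_filter.1 hw).2 with ⟨rfl, -⟩ | ⟨rfl, -⟩ <;> simp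
  · simp only [not_exists, not_and] at h
    simp [Finset.filter_false_of_mem h]

variable [Fintype V]

theorem sum_sq_sum_filter_pair_le (m : V → V) (N : Finset V) {f : V → ℝ}
    (hf : ∀ u, |f u| ≤ 1) :
    ∑ q, (∑ u ∈ N with s(u, m u) = q, f u) ^ 2 ≤ 2 * #N := by
  have hfiber (q : Sym2 V) :
      (∑ u ∈ N with s(u, m u) = q, f u) ^ 2 ≤ 2 * #{u ∈ N | s(u, m u) = q} := by
    have hsum : |∑ u ∈ N with s(u, m u) = q, f u| ≤ #{u ∈ N | s(u, m u) = q} :=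
      (Finset.abs_sum_le_sum_abs _ _).trans (by simpa using Finset.sum_le_sum fun u _ => hf u)
    have htwo : (#{u ∈ N | s(u, m u) = q} : ℝ) ≤ 2 := by
      exact_mod_cast card_filter_pair_eq_le_two m N q
    rw [← sq_abs]
    nlinarith [abs_nonneg (∑ u ∈ N with s(u, m u) = q, f u)]
  calc ∑ q, (∑ u ∈ N with s(u, m u) = q, f u) ^ 2
      ≤ ∑ q, 2 * (#{u ∈ N | s(u, m u) = q} : ℝ) := Finset.sum_le_sum fun q _ => hfiber q
    _ = 2 * #N := by
        rw [← Finset.mul_sum,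
          Finset.card_eq_sum_card_fiberwise (t := (Finset.univ : Finset (Sym2 V)))
            (fun _ _ => Finset.mem_univ _)]
        push_cast; rfl

theorem sum_boolSign_pairColouring (m : V → V) (τ : V → Bool) (ω : Sym2 V → Bool)
    (N : Finset V) :
    ∑ u ∈ N, boolSign (pairColouring m τ ω u)
      = ∑ q, (∑ u ∈ N with s(u, m u) = q, boolSign (!τ u)) * boolSign (ω q) := by
  rw [← Finset.sum_fiberwise N (fun u => s(u, m u))]
  refine Finset.sum_congr rfl fun q _ => ?_
  rw [Finset.sum_mul]
  refine Finset.sum_congr rfl fun u hu => ?_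
  rw [← (Finset.mem_filter.1 hu).2, pairColouring, boolSign_xor, mul_comm]

noncomputable def imbalanced (m : V → V) (τ : V → Bool) (t : ℝ) (N : Finset V) :
    Finset (Sym2 V → Bool) :=
  {ω | t ≤ |∑ u ∈ N, boolSign (pairColouring m τ ω u)|}

theorem dependsOn_mem_imbalanced (m : V → V) (τ : V → Bool) (t : ℝ) (N : Finset V) :
    DependsOn (· ∈ imbalanced m τ t N) (N.image fun u => s(u, m u) : Set (Sym2 V)) := by
  intro ω ω' h
  have hsum : ∑ u ∈ N, boolSign (pairColouring m τ ω u)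
      = ∑ u ∈ N, boolSign (pairColouring m τ ω' u) :=
    Finset.sum_congr rfl fun u hu => by
      rw [pairColouring, pairColouring, h _ (Finset.mem_coe.2 (Finset.mem_image_of_mem _ hu))]
  simp only [imbalanced, Finset.mem_filter, Finset.mem_univ, true_and, hsum]

theorem card_imbalanced_le (m : V → V) (τ : V → Bool) {t : ℝ} (ht : 0 ≤ t) {N : Finset V}
    {d : ℕ} (hd : 0 < d) (hN : #N ≤ d) :
    (#(imbalanced m τ t N) : ℝ) ≤ 2 * (2 ^ Fintype.card (Sym2 V) * exp (-t ^ 2 / (4 * d))) := by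
  have hsq := sum_sq_sum_filter_pair_le m N (f := fun u => boolSign (!τ u))
    fun u => by cases τ u <;> simp [boolSign]
  have := card_le_abs_sum_mul_boolSign_le _ ht (m := 2 * d) (by positivity)
    (hsq.trans (by gcongr))
  simp only [imbalanced, sum_boolSign_pairColouring]
  convert this using 4
  ring

end PairColouring

section Graph

theorem deg_le_sub_one_of_edeg_le {E : Finset (Sym2 V)} {v u : V} {β : ℕ} (he : s(v, u) ∈ E)
    (h : edeg E s(v, u) ≤ β) : deg E v ≤ β - 1 := by
  have hu : 1 ≤ deg E u := Finset.card_pos.2 ⟨_, Finset.mem_filter.2 ⟨he, Sym2.mem_mk_right v u⟩⟩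
  simp only [edeg, Sym2.lift_mk] at h
  omega

theorem deg_le_of_hierarchy {β k : ℕ} {H : ℕ → Finset (Sym2 V)} (hH0 : H 0 = ∅)
    (hprop1 : ∀ i, 1 ≤ i → i ≤ k → ∀ e ∈ H i \ H (i - 1), edeg (H i) e ≤ β) :
    ∀ i ≤ k, ∀ v, deg (H i) v ≤ β - 1 := by
  intro i
  induction i with
  | zero => simp [hH0, deg]
  | succ i ih =>
    intro hi v
    by_cases hnew : ∃ e ∈ H (i + 1) \ H i, v ∈ e
    · obtain ⟨e, he, hv⟩ := hnew
      obtain ⟨u, rfl⟩ := Sym2.mem_iff_exists.1 hv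
      exact deg_le_sub_one_of_edeg_le (Finset.mem_sdiff.1 he).1 (hprop1 (i + 1) (by omega) hi _ he)
    · refine le_trans (Finset.card_le_card fun e he => ?_) (ih (by omega) v)
      obtain ⟨he, hv⟩ := Finset.mem_filter.1 he
      refine Finset.mem_filter.2 ⟨?_, hv⟩
      by_contra h
      exact hnew ⟨e, Finset.mem_sdiff.2 ⟨he, h⟩, hv⟩

theorem IsMatching.exists_involutive {M : Finset (Sym2 V)} (hM : IsMatching M) :
    ∃ m : V → V, Function.Involutive m ∧ ∀ a b, s(a, b) ∈ M → m a = b := by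
  classical
  let m v := if h : ∃ u, s(v, u) ∈ M then h.choose else v
  have hmM (a b : V) (h : s(a, b) ∈ M) : m a = b := by
    have hex : ∃ u, s(a, u) ∈ M := ⟨b, h⟩
    simp only [m, dif_pos hex]
    by_contra hne
    refine hM.2 _ hex.choose_spec _ h (fun he => hne ?_) a (Sym2.mem_mk_left _ _)
      (Sym2.mem_mk_left _ _)
    exact Sym2.congr_right.1 he
  refine ⟨m, fun v => ?_, hmM⟩
  by_cases h : ∃ u, s(v, u) ∈ M
  · have hv : s(v, m v) ∈ M := hmM v _ h.choose_spec ▸ h.choose_spec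
    exact hmM _ _ (Sym2.eq_swap ▸ hv)
  · simp only [m, dif_neg h]

theorem Function.Involutive.exists_flip {α : Type*} [Fintype α] {m : α → α}
    (hm : Function.Involutive m) :
    ∃ τ : α → Bool, ∀ u, m u ≠ u → τ (m u) = !τ u := by
  let e := Fintype.equivFin α
  refine ⟨fun u => decide (e u < e (m u)), fun u hu => ?_⟩
  have hne : e (m u) ≠ e u := e.injective.ne hu
  show decide (e (m u) < e (m (m u))) = !decide (e u < e (m u))
  rw [hm u]
  rcases hne.lt_or_gt with h | h <;> simp [h, h.not_gt]

variable [Fintype V]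

def nbrs (E : Finset (Sym2 V)) (v : V) : Finset V := {u | s(v, u) ∈ E}

theorem mem_nbrs {E : Finset (Sym2 V)} {v u : V} : u ∈ nbrs E v ↔ s(v, u) ∈ E := by
  simp [nbrs]

theorem mem_nbrs_comm {E : Finset (Sym2 V)} {v u : V} : u ∈ nbrs E v ↔ v ∈ nbrs E u := by
  simp [nbrs, Sym2.eq_swap]

theorem nbrs_mono {E F : Finset (Sym2 V)} (h : E ⊆ F) (v : V) : nbrs E v ⊆ nbrs F v :=
  fun _ hu => mem_nbrs.2 (h (mem_nbrs.1 hu))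

theorem card_filter_nbrs (E : Finset (Sym2 V)) (v : V) (P : Sym2 V → Prop) [DecidablePred P] :
    #{u ∈ nbrs E v | P s(v, u)} = deg (E.filter P) v := by
  refine Finset.card_nbij (fun u => s(v, u)) (fun u hu => ?_)
    (fun a _ b _ h => Sym2.congr_right.1 h) fun e he => ?_
  · simp only [Finset.mem_coe, Finset.mem_filter, mem_nbrs] at hu ⊢
    exact ⟨hu, Sym2.mem_mk_left v u⟩
  · simp only [Finset.mem_coe, Finset.mem_filter] at he
    obtain ⟨u, rfl⟩ := Sym2.mem_iff_exists.1 he.2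
    exact ⟨u, by simpa [mem_nbrs] using he.1, rfl⟩

theorem card_nbrs (E : Finset (Sym2 V)) (v : V) : #(nbrs E v) = deg E v := by
  simpa using card_filter_nbrs E v fun _ => True

theorem deg_filter_crossing (E : Finset (Sym2 V)) (χ : V → Bool) (v : V) :
    deg (E.filter fun e => ∃ u w, e = s(u, w) ∧ u ∈ ({x | χ x} : Finset V)
      ∧ w ∉ ({x | χ x} : Finset V)) v = #{u ∈ nbrs E v | χ u ≠ χ v} := by
  rw [← card_filter_nbrs]
  refine congrArg Finset.card (Finset.filter_congr fun u _ => ?_)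
  simp only [Finset.mem_filter, Finset.mem_univ, true_and]
  constructor
  · rintro ⟨a, b, h, ha, hb⟩
    rcases Sym2.eq_iff.1 h with ⟨rfl, rfl⟩ | ⟨rfl, rfl⟩ <;> simp_all
  · intro h
    cases hv : χ v
    · exact ⟨u, v, Sym2.eq_swap, by simpa [hv] using h, by simp [hv]⟩
    · exact ⟨v, u, rfl, hv, by simpa [hv] using h⟩

end Graph

section BalancedBipartition

open Real

variable [Fintype V]

def nbrPairs (m : V → V) (E : Finset (Sym2 V)) (v : V) : Finset (Sym2 V) :=
  (nbrs E v).image fun u => s(u, m u)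

theorem card_filter_not_disjoint_nbrPairs_le (m : V → V) (E : Finset (Sym2 V)) {d : ℕ}
    (hd : ∀ v, #(nbrs E v) ≤ d) (v : V) :
    #{w | ¬Disjoint (nbrPairs m E v) (nbrPairs m E w)} ≤ 2 * d ^ 2 := by
  have hsub : ({w | ¬Disjoint (nbrPairs m E v) (nbrPairs m E w)} : Finset V)
      ⊆ (nbrs E v).biUnion fun u => nbrs E u ∪ nbrs E (m u) := by
    intro w hw
    obtain ⟨q, hq₁, hq₂⟩ := Finset.not_disjoint_iff.1 (Finset.mem_filter.1 hw).2
    obtain ⟨u, hu, rfl⟩ := Finset.mem_image.1 hq₁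
    obtain ⟨u', hu', hq⟩ := Finset.mem_image.1 hq₂
    refine Finset.mem_biUnion.2 ⟨u, hu, ?_⟩
    rw [Finset.mem_union, mem_nbrs_comm (u := w), mem_nbrs_comm (u := w)]
    rcases Sym2.eq_iff.1 hq with ⟨rfl, -⟩ | ⟨rfl, -⟩
    · exact Or.inl hu'
    · exact Or.inr hu'
  calc _ ≤ _ := Finset.card_le_card hsub
    _ ≤ ∑ u ∈ nbrs E v, #(nbrs E u ∪ nbrs E (m u)) := Finset.card_biUnion_le
    _ ≤ ∑ u ∈ nbrs E v, 2 * d :=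
        Finset.sum_le_sum fun u _ => (Finset.card_union_le _ _).trans (by linarith [hd u, hd (m u)])
    _ = #(nbrs E v) * (2 * d) := by rw [Finset.sum_const, smul_eq_mul]
    _ ≤ 2 * d ^ 2 := by nlinarith [hd v]

theorem exists_forall_notMem_imbalanced (m : V → V) (τ : V → Bool) (H : ℕ → Finset (Sym2 V))
    {k d : ℕ} (hd : 0 < d) (hsub : ∀ i ≤ k, H i ⊆ H k) (hdeg : ∀ v, deg (H k) v ≤ d) {t : ℝ}
    (ht : 0 ≤ t) (hnum : 8 * (2 * d ^ 2 * k + 1 : ℝ) * exp (-t ^ 2 / (4 * d)) ≤ 1) :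
    ∃ ω, ∀ v, ∀ i ∈ Finset.Icc 1 k, ω ∉ imbalanced m τ t (nbrs (H i) v) := by
  have hdeg' (i : ℕ) (hi : i ≤ k) (v : V) : #(nbrs (H i) v) ≤ d :=
    (Finset.card_le_card (nbrs_mono (hsub i hi) v)).trans (card_nbrs (H k) v ▸ hdeg v)
  have hp (p : V × ℕ) (hpJ : p ∈ (Finset.univ : Finset V) ×ˢ Finset.Icc 1 k) :
      4 * ((2 * d ^ 2 * k : ℕ) + 1) * (#(imbalanced m τ t (nbrs (H p.2) p.1)) : ℝ)
        ≤ 2 ^ Fintype.card (Sym2 V) := by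
    have hE := card_imbalanced_le m τ ht hd
      (hdeg' p.2 (Finset.mem_Icc.1 (Finset.mem_product.1 hpJ).2).2 p.1)
    push_cast
    calc 4 * (2 * (d : ℝ) ^ 2 * k + 1) * #(imbalanced m τ t (nbrs (H p.2) p.1))
        ≤ 4 * (2 * (d : ℝ) ^ 2 * k + 1)
          * (2 * (2 ^ Fintype.card (Sym2 V) * exp (-t ^ 2 / (4 * d)))) := by gcongr
      _ = 2 ^ Fintype.card (Sym2 V) * (8 * (2 * d ^ 2 * k + 1) * exp (-t ^ 2 / (4 * d))) := by ring
      _ ≤ 2 ^ Fintype.card (Sym2 V) := mul_le_of_le_one_right (by positivity) hnum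
  have hdep (p : V × ℕ) : #{q ∈ (Finset.univ : Finset V) ×ˢ Finset.Icc 1 k |
      q ≠ p ∧ ¬Disjoint (nbrPairs m (H k) p.1) (nbrPairs m (H k) q.1)} ≤ 2 * d ^ 2 * k := by
    refine (Finset.card_le_card (t := ({w | ¬Disjoint (nbrPairs m (H k) p.1) (nbrPairs m (H k) w)} :
      Finset V) ×ˢ Finset.Icc 1 k) fun q hq => ?_).trans ?_
    · simp only [Finset.mem_filter, Finset.mem_product, Finset.mem_univ, true_and] at hq ⊢
      exact ⟨hq.2.2, hq.1⟩
    · rw [Finset.card_product, Nat.card_Icc, Nat.add_sub_cancel]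
      exact Nat.mul_le_mul_right _
        (card_filter_not_disjoint_nbrPairs_le m (H k) (fun v => card_nbrs (H k) v ▸ hdeg v) p.1)
  refine (lovasz_local_lemma_symmetric (fun p hp => (dependsOn_mem_imbalanced m τ t _).mono
      (Finset.coe_subset.2 (Finset.image_subset_image
        (nbrs_mono (hsub p.2 (Finset.mem_Icc.1 (Finset.mem_product.1 hp).2).2) p.1))))
    hp fun p _ => hdep p).imp
      fun ω hω v i hi => hω (v, i) (Finset.mem_product.2 ⟨Finset.mem_univ v, hi⟩)

theorem exists_crossing_of_mem {α : Type*} [Fintype α] {M : Finset (Sym2 α)}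
    (hM : ∀ e ∈ M, ¬e.IsDiag) {m : α → α} (hm : Function.Involutive m)
    (hmM : ∀ a b, s(a, b) ∈ M → m a = b) {τ : α → Bool} (hτ : ∀ u, m u ≠ u → τ (m u) = !τ u)
    (ω : Sym2 α → Bool) :
    ∀ e ∈ M, ∃ u w, e = s(u, w) ∧ u ∈ ({x | pairColouring m τ ω x} : Finset α)
      ∧ w ∉ ({x | pairColouring m τ ω x} : Finset α) := by
  intro e he
  induction e using Sym2.ind with
  | h a b =>
  have hab : m a = b := hmM a b he
  have hne : m a ≠ a := hab ▸ fun h => hM _ he (Sym2.mk_isDiag_iff.2 h.symm)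
  have hcol : pairColouring m τ ω b = !pairColouring m τ ω a :=
    hab ▸ pairColouring_apply_of_involutive hm (hτ a hne) ω
  cases hχ : pairColouring m τ ω a
  · exact ⟨b, a, Sym2.eq_swap, by simp [hcol, hχ], by simp [hχ]⟩
  · exact ⟨a, b, rfl, by simp [hχ], by simp [hcol, hχ]⟩

theorem abs_deg_filter_crossing_sub_half_lt (E : Finset (Sym2 V)) (m : V → V) (τ : V → Bool)
    {ω : Sym2 V → Bool} {t : ℝ} {v : V} (h : ω ∉ imbalanced m τ t (nbrs E v)) :
    |(deg (E.filter fun e => ∃ u w, e = s(u, w) ∧ u ∈ ({x | pairColouring m τ ω x} : Finset V)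
      ∧ w ∉ ({x | pairColouring m τ ω x} : Finset V)) v : ℝ) - deg E v / 2| < t / 2 := by
  simp only [imbalanced, Finset.mem_filter, Finset.mem_univ, true_and, not_le] at h
  rw [deg_filter_crossing, ← card_nbrs,
    ← abs_two_mul_card_filter_ne_sub_card _ (pairColouring m τ ω v)] at *
  rw [show ∀ a n : ℝ, a - n / 2 = (2 * a - n) / 2 from fun a n => by ring, abs_div, abs_two]
  linarith

theorem eight_mul_exp_le_one {β k : ℕ} (hβ : 2 ≤ β) (hk : 1 ≤ k) :
    8 * (2 * (β : ℝ) ^ 2 * k + 1)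
      * exp (-(2 * (6 * √(β * log (k * β)))) ^ 2 / (4 * β)) ≤ 1 := by
  have hβ' : (2 : ℝ) ≤ β := by exact_mod_cast hβ
  have hk' : (1 : ℝ) ≤ k := by exact_mod_cast hk
  set c : ℝ := k * β with hc
  have hc2 : 2 ≤ c := by nlinarith
  have hexp : exp (-(2 * (6 * √(β * log c))) ^ 2 / (4 * β)) = (c ^ 36)⁻¹ := by
    rw [mul_pow, mul_pow, Real.sq_sqrt (mul_nonneg (by positivity) (log_nonneg (by linarith))),
      show -(2 ^ 2 * (6 ^ 2 * (β * log c))) / (4 * β) = -((36 : ℕ) * log c) by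
        field_simp; ring,
      exp_neg, exp_nat_mul, exp_log (by positivity)]
  rw [hexp, ← div_eq_mul_inv, div_le_one (by positivity)]
  have hk2 : (β : ℝ) ^ 2 * k ≤ β ^ 2 * k ^ 2 :=
    mul_le_mul_of_nonneg_left (by nlinarith) (sq_nonneg _)
  calc 8 * (2 * (β : ℝ) ^ 2 * k + 1) ≤ 24 * c ^ 2 := by
        rw [hc, mul_pow]; nlinarith [pow_le_pow_left₀ (by norm_num) hβ' 2]
    _ ≤ 2 ^ 34 * c ^ 2 := by gcongr; norm_num
    _ ≤ c ^ 34 * c ^ 2 := by gcongr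
    _ = c ^ 36 := by ring

end BalancedBipartition

theorem hedcs_balanced_bipartition_general {V : Type*} [Fintype V] [DecidableEq V]
    (β k : ℕ) (hβ : 2 ≤ β) (hk : 1 ≤ k)
    (H : ℕ → Finset (Sym2 V))
    (hH0 : H 0 = ∅) (hchain : ∀ i < k, H i ⊆ H (i + 1))
    (hprop1 : ∀ i, 1 ≤ i → i ≤ k → ∀ e ∈ H i \ H (i - 1), edeg (H i) e ≤ β)
    (M : Finset (Sym2 V)) (hM : IsMatching M) :
    ∃ L : Finset V,
      (∀ e ∈ M, ∃ u v, e = s(u, v) ∧ u ∈ L ∧ v ∉ L) ∧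
      ∀ v : V, ∀ i, 1 ≤ i → i ≤ k →
        |((deg ((H i).filter (fun e => ∃ u w, e = s(u, w) ∧ u ∈ L ∧ w ∉ L)) v : ℝ))
            - (deg (H i) v : ℝ) / 2|
          < 6 * Real.sqrt ((β : ℝ) * Real.log ((k : ℝ) * β)) + 1 := by
  have hsub (i : ℕ) (hi : i ≤ k) : H i ⊆ H k :=
    monotoneOn_of_le_succ Set.ordConnected_Iic
      (fun a _ _ ha => hchain a (by simpa [Order.succ_eq_add_one] using ha))
      hi (Set.mem_Iic.2 le_rfl) hi
  obtain ⟨m, hm, hmM⟩ := hM.exists_involutive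
  obtain ⟨τ, hτ⟩ := hm.exists_flip
  obtain ⟨ω, hω⟩ := exists_forall_notMem_imbalanced m τ H (by omega : 0 < β) hsub
    (fun v => (deg_le_of_hierarchy hH0 hprop1 k le_rfl v).trans (Nat.sub_le β 1))
    (by positivity) (eight_mul_exp_le_one hβ hk)
  refine ⟨({x | pairColouring m τ ω x} : Finset V), exists_crossing_of_mem hM.1 hm hmM hτ ω,
    fun v i hi hik => ?_⟩
  have := abs_deg_filter_crossing_sub_half_lt (H i) m τ (hω v i (Finset.mem_Icc.2 ⟨hi, hik⟩))
  linarith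

/-- For a `(β,k)`-HEDCS `H` of `G` with hierarchical decomposition
`∅ = H_0 ⊆ … ⊆ H_k = H` and a matching `M` of `G`, there is a partition `V = L ⊔ R`
(with `R = Lᶜ`) such that every edge of `M` crosses the partition, and for every vertex
`v` and every `i ∈ [k]`, `|deg_{H̃_i}(v) − deg_{H_i}(v)/2| < 6·√(β·ln(kβ)) + 1`, where
`H̃_i` is the set of edges of `H_i` crossing the partition. -/
theorem hedcs_balanced_bipartition {V : Type*} [Fintype V] [DecidableEq V]
    (β k : ℕ) (hβ : 2 ≤ β) (hk : 1 ≤ k)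
    (G : Finset (Sym2 V)) (hG : ∀ e ∈ G, ¬ e.IsDiag)
    (H : ℕ → Finset (Sym2 V))
    (hH0 : H 0 = ∅) (hchain : ∀ i < k, H i ⊆ H (i + 1)) (hHk : H k ⊆ G)
    (hprop1 : ∀ i, 1 ≤ i → i ≤ k → ∀ e ∈ H i \ H (i - 1), edeg (H i) e ≤ β)
    (hprop2 : ∀ e ∈ G \ H k, β - 1 ≤ edeg (H k) e)
    (M : Finset (Sym2 V)) (hMG : M ⊆ G) (hM : IsMatching M) :
    ∃ L : Finset V,
      (∀ e ∈ M, ∃ u v, e = s(u, v) ∧ u ∈ L ∧ v ∉ L) ∧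
      ∀ v : V, ∀ i, 1 ≤ i → i ≤ k →
        |((deg ((H i).filter (fun e => ∃ u w, e = s(u, w) ∧ u ∈ L ∧ w ∉ L)) v : ℝ))
            - (deg (H i) v : ℝ) / 2|
          < 6 * Real.sqrt ((β : ℝ) * Real.log ((k : ℝ) * β)) + 1 :=
  hedcs_balanced_bipartition_general β k hβ hk H hH0 hchain hprop1 M hM
end

section
/- Let k ≥ 1 and β' ≥ 1 be integers, let G be a bipartite graph with edge set E partitioned into levels E_1, …, E_k, and let w : E → [0,1] be edge weights such that for every j ∈ [k] and every edge e = (u,v) ∈ E_j with w(e) > 0, it holds that ∑_{i=1}^{j} ( ∑_{e' ∈ E_i incident to u} w(e') + ∑_{e' ∈ E_i incident to v} w(e') ) ≤ β'. Then there exists a subset F ⊆ E with |F| ≥ ∑_{e ∈ E} w(e) such that for every j ∈ [k] and every edge e = (u,v) ∈ F ∩ E_j, ∑_{i=1}^{j} ( deg_{F ∩ E_i}(u) + deg_{F ∩ E_i}(v) ) ≤ β' + 2k − 1; in particular, F with the hierarchical decomposition F_i := F ∩ (E_1 ∪ … ∪ E_i) satisfies the HEDCS edge-degree constraint with bound β'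 + 2k − 1. -/
open Finset

variable {V : Type*} [DecidableEq V]

set_option linter.unusedSectionVars false
set_option linter.unusedVariables false

lemma DRparity (A : Finset V) (p : ℕ → V) :
    ∀ n : ℕ, (∀ j ∈ Finset.Icc 1 n, ((p (j-1) ∈ A) ↔ ¬ (p j ∈ A))) →
      ((p 0 ∈ A ↔ p n ∈ A) ↔ Even n) := by
  intro n
  induction n with
  | zero => intro _; simp
  | succ n ih =>
    intro h
    have h1 : (p n ∈ A) ↔ ¬ (p (n+1) ∈ A) := by
      have := h (n+1) (by simp [Finset.mem_Icc])
      simpa using this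
    have h2 := ih (fun j hj => h j (by simp only [Finset.mem_Icc] at hj ⊢; omega))
    rw [Nat.even_add_one, ← h2]
    by_cases hp : p 0 ∈ A <;> by_cases hq : p n ∈ A <;> by_cases hr : p (n+1) ∈ A <;>
      simp_all

lemma DRstep {A B : Finset V} (hAB : Disjoint A B) {E : Finset (Sym2 V)}
    (hbip : ∀ e ∈ E, ∃ u v, e = s(u, v) ∧ u ∈ A ∧ v ∈ B)
    {x y : V} (h : s(x, y) ∈ E) : (x ∈ A) ↔ ¬ (y ∈ A) := by
  obtain ⟨u, v, he, hu, hv⟩ := hbip _ h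
  have hvA : v ∉ A := Finset.disjoint_right.mp hAB hv
  rw [Sym2.eq_iff] at he
  rcases he with ⟨rfl, rfl⟩ | ⟨rfl, rfl⟩ <;> simp [hu, hvA]

def DRIsAlt (E : Finset (Sym2 V)) (m : ℕ) (p : ℕ → V) : Prop :=
  1 ≤ m ∧ (∀ j ∈ Finset.Icc 1 m, s(p (j-1), p j) ∈ E) ∧
  (∀ i ∈ Finset.Icc 1 m, ∀ j ∈ Finset.Icc 1 m,
      s(p (i-1), p i) = s(p (j-1), p j) → i = j) ∧
  (∀ v : V, (∑ j ∈ Finset.Icc 1 m,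
      (if v ∈ s(p (j-1), p j) then ((-1:ℝ))^(j-1) else 0)) = 0 ∨ deg E v = 1)

lemma DRtwo_ite (t j : ℕ) (P : Prop) [Decidable P]
    (hmem : P ↔ (j = t + 1 ∨ j = t)) :
    (if P then ((-1:ℝ))^(j-1) else 0)
      = (if j = t then ((-1:ℝ))^(t-1) else 0) + (if j = t+1 then ((-1:ℝ))^t else 0) := by
  by_cases h1 : j = t
  · have h2 : j ≠ t + 1 := by omega
    rw [if_pos (hmem.mpr (Or.inr h1)), if_pos h1, if_neg h2, h1, add_zero]
  · by_cases h2 : j = t+1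
    · rw [if_pos (hmem.mpr (Or.inl h2)), if_neg h1, if_pos h2, h2, zero_add]
      simp
    · rw [if_neg (by rw [hmem]; tauto), if_neg h1, if_neg h2, add_zero]

lemma DRtwo_sum (m t : ℕ) (ht1 : 1 ≤ t) (htm : t + 1 ≤ m) (f : ℕ → ℝ)
    (c : ∀ j ∈ Finset.Icc 1 m, f j
      = (if j = t then ((-1:ℝ))^(t-1) else 0) + (if j = t+1 then ((-1:ℝ))^t else 0)) :
    ∑ j ∈ Finset.Icc 1 m, f j = 0 := by
  rw [Finset.sum_congr rfl c, Finset.sum_add_distrib, Finset.sum_ite_eq', Finset.sum_ite_eq',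
    if_pos (by simp only [Finset.mem_Icc]; omega), if_pos (by simp only [Finset.mem_Icc]; omega)]
  have hp : ((-1:ℝ))^t = ((-1:ℝ))^(t-1) * (-1) := by
    rw [← pow_succ]
    congr 1
    omega
  rw [hp]; ring

lemma DRisAlt_of_path {E : Finset (Sym2 V)} {m : ℕ} {p : ℕ → V}
    (hm : 1 ≤ m)
    (hedge : ∀ j ∈ Finset.Icc 1 m, s(p (j-1), p j) ∈ E)
    (hinj : ∀ i ≤ m, ∀ j ≤ m, p i = p j → i = j)
    (h0 : deg E (p 0) = 1) (hm1 : deg E (p m) = 1) :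
    DRIsAlt E m p := by
  refine ⟨hm, hedge, ?_, ?_⟩
  · intro i hi j hj hij
    simp only [Finset.mem_Icc] at hi hj
    rw [Sym2.eq_iff] at hij
    rcases hij with ⟨h1, h2⟩ | ⟨h1, h2⟩
    · exact hinj i (by omega) j (by omega) h2
    · have e1 := hinj (i-1) (by omega) j (by omega) h1
      have e2 := hinj i (by omega) (j-1) (by omega) h2
      omega
  · intro v
    by_cases hv : ∃ t, t ≤ m ∧ p t = v
    · obtain ⟨t, htm, rfl⟩ := hv
      by_cases ht0 : t = 0
      · subst ht0; right; exact h0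
      by_cases htm' : t = m
      · subst htm'; right; exact hm1
      left
      apply DRtwo_sum m t (by omega) (by omega)
      intro j hj
      simp only [Finset.mem_Icc] at hj
      apply DRtwo_ite
      rw [Sym2.mem_iff]
      constructor
      · rintro (h | h)
        · left
          have := hinj t htm (j-1) (by omega) h
          omega
        · right
          exact (hinj t htm j (by omega) h).symm
      · rintro (rfl | rfl)
        · left; simp
        · right; rfl
    · left
      push_neg at hv
      apply Finset.sum_eq_zero
      intro j hj
      simp only [Finset.mem_Icc] at hj
      rw [if_neg]
      rw [Sym2.mem_iff]
      push_neg
      exact ⟨fun h => hv (j-1) (by omega) h.symm, fun h => hv j (by omega) h.symm⟩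

lemma DRisAlt_of_cycle {A B : Finset V} (hAB : Disjoint A B) {E : Finset (Sym2 V)}
    (hbip : ∀ e ∈ E, ∃ u v, e = s(u, v) ∧ u ∈ A ∧ v ∈ B)
    {c : ℕ} {q : ℕ → V} (hc : 1 ≤ c)
    (hedge : ∀ j ∈ Finset.Icc 1 c, s(q (j-1), q j) ∈ E)
    (heinj : ∀ i ∈ Finset.Icc 1 c, ∀ j ∈ Finset.Icc 1 c,
      s(q (i-1), q i) = s(q (j-1), q j) → i = j)
    (hinj : ∀ i < c, ∀ j < c, q i = q j → i = j)
    (hqc : q c = q 0) :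
    DRIsAlt E c q := by
  have heven : Even c := by
    have hpar := DRparity A q c (fun j hj => DRstep hAB hbip (hedge j hj))
    rw [← hpar, hqc]
  have hc2 : 2 ≤ c := by
    rcases heven with ⟨r, hr⟩; omega
  refine ⟨hc, hedge, heinj, ?_⟩
  intro v
  left
  by_cases hv : ∃ t, t < c ∧ q t = v
  · obtain ⟨t, htc, rfl⟩ := hv
    by_cases ht0 : t = 0
    · subst ht0
      have key : ∀ j ∈ Finset.Icc 1 c,
          (if q 0 ∈ s(q (j-1), q j) then ((-1:ℝ))^(j-1) else 0)
          = (if j = 1 then ((-1:ℝ))^(0:ℕ) else 0) + (if j = c then ((-1:ℝ))^(c-1) else 0) := by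
        intro j hj
        simp only [Finset.mem_Icc] at hj
        have hmem : (q 0 ∈ s(q (j-1), q j)) ↔ (j = 1 ∨ j = c) := by
          rw [Sym2.mem_iff]
          constructor
          · rintro (h | h)
            · left; have := hinj 0 (by omega) (j-1) (by omega) h; omega
            · by_cases hjc : j = c
              · right; exact hjc
              · left; have := hinj 0 (by omega) j (by omega) h; omega
          · rintro (rfl | rfl)
            · left; simp
            · right; exact hqc.symm
        by_cases h1 : j = 1
        · rw [if_pos (hmem.mpr (Or.inl h1)), if_pos h1, if_neg (by omega), h1, add_zero]
        · by_cases h2 : j = c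
          · rw [if_pos (hmem.mpr (Or.inr h2)), if_neg h1, if_pos h2, h2, zero_add]
          · rw [if_neg (by rw [hmem]; tauto), if_neg h1, if_neg h2, add_zero]
      rw [Finset.sum_congr rfl key, Finset.sum_add_distrib, Finset.sum_ite_eq', Finset.sum_ite_eq',
        if_pos (by simp only [Finset.mem_Icc]; omega), if_pos (by simp only [Finset.mem_Icc]; omega)]
      have hodd : Odd (c - 1) := by rcases heven with ⟨r, hr⟩; exact ⟨r - 1, by omega⟩
      rw [hodd.neg_one_pow]
      norm_num
    · apply DRtwo_sum c t (by omega) (by omega)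
      intro j hj
      simp only [Finset.mem_Icc] at hj
      apply DRtwo_ite
      rw [Sym2.mem_iff]
      constructor
      · rintro (h | h)
        · left
          have := hinj t htc (j-1) (by omega) h
          omega
        · by_cases hjc : j = c
          · subst hjc; rw [hqc] at h
            have := hinj t htc 0 (by omega) h
            omega
          · right
            have := hinj t htc j (by omega) h
            omega
      · rintro (rfl | rfl)
        · left; simp
        · right; rfl
  · push_neg at hv
    apply Finset.sum_eq_zero
    intro j hj
    simp only [Finset.mem_Icc] at hj
    rw [if_neg]
    rw [Sym2.mem_iff]
    push_neg
    constructor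
    · intro h
      exact hv (j-1) (by omega) h.symm
    · intro h
      by_cases hjc : j = c
      · subst hjc; rw [hqc] at h; exact hv 0 (by omega) h.symm
      · exact hv j (by omega) h.symm

lemma DRextend {A B : Finset V} (hAB : Disjoint A B) {E : Finset (Sym2 V)}
    (hbip : ∀ e ∈ E, ∃ u v, e = s(u, v) ∧ u ∈ A ∧ v ∈ B) :
    ∀ fuel m : ℕ, ∀ p : ℕ → V, 1 ≤ m →
      (∀ j ∈ Finset.Icc 1 m, s(p (j-1), p j) ∈ E) →
      (∀ i ≤ m, ∀ j ≤ m, p i = p j → i = j) →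
      (A ∪ B).card ≤ m + fuel →
      (∃ m' p', DRIsAlt E m' p') ∨
      (∃ m' : ℕ, ∃ p' : ℕ → V, 1 ≤ m' ∧ (∀ j ∈ Finset.Icc 1 m', s(p' (j-1), p' j) ∈ E) ∧
        (∀ i ≤ m', ∀ j ≤ m', p' i = p' j → i = j) ∧ p' 0 = p 0 ∧ deg E (p' m') = 1) := by
  intro fuel
  induction fuel with
  | zero =>
    intro m p hm hedge hinj hcard
    exfalso
    have hsub : (Finset.range (m+1)).image p ⊆ A ∪ B := by
      intro x hx
      simp only [Finset.mem_image, Finset.mem_range] at hx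
      obtain ⟨j, hj, rfl⟩ := hx
      by_cases hj0 : j = 0
      · subst hj0
        obtain ⟨u, v, he, hu, hv⟩ := hbip _ (hedge 1 (by simp only [Finset.mem_Icc]; omega))
        have hmem : p 0 ∈ s(p (1-1), p 1) := by
          norm_num
        rw [he, Sym2.mem_iff] at hmem
        rcases hmem with h | h <;> rw [h] <;> simp [Finset.mem_union, hu, hv]
      · obtain ⟨u, v, he, hu, hv⟩ := hbip _ (hedge j (by simp only [Finset.mem_Icc]; omega))
        have hmem : p j ∈ s(p (j-1), p j) := Sym2.mem_mk_right _ _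
        rw [he, Sym2.mem_iff] at hmem
        rcases hmem with h | h <;> rw [h] <;> simp [Finset.mem_union, hu, hv]
    have hinjim : Set.InjOn p ↑(Finset.range (m+1)) := by
      intro a ha b hb hab
      simp only [Finset.coe_range, Set.mem_Iio] at ha hb
      exact hinj a (by omega) b (by omega) hab
    have h1 : ((Finset.range (m+1)).image p).card = m + 1 := by
      rw [Finset.card_image_of_injOn hinjim, Finset.card_range]
    have := Finset.card_le_card hsub
    omega
  | succ fuel ih =>
    intro m p hm hedge hinj hcard
    by_cases hdeg : deg E (p m) = 1
    · exact Or.inr ⟨m, p, hm, hedge, hinj, rfl, hdeg⟩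
    have hemE : s(p (m-1), p m) ∈ E := hedge m (by simp only [Finset.mem_Icc]; omega)
    have hem : s(p (m-1), p m) ∈ E.filter (fun e => p m ∈ e) := by
      simp only [Finset.mem_filter]
      exact ⟨hemE, Sym2.mem_mk_right _ _⟩
    have h2 : 1 < (E.filter (fun e => p m ∈ e)).card := by
      have h1 : 0 < (E.filter (fun e => p m ∈ e)).card := Finset.card_pos.mpr ⟨_, hem⟩
      have : deg E (p m) = (E.filter (fun e => p m ∈ e)).card := rfl
      omega
    obtain ⟨f, hf, hfne⟩ := Finset.exists_mem_ne h2 (s(p (m-1), p m))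
    rw [Finset.mem_filter] at hf
    obtain ⟨hfE, hpmf⟩ := hf
    obtain ⟨u, v', hfe, huA, hvB⟩ := hbip f hfE
    have hx : ∃ x : V, f = s(p m, x) ∧ x ≠ p m := by
      subst hfe
      rw [Sym2.mem_iff] at hpmf
      have huv : u ≠ v' := fun h => (Finset.disjoint_right.mp hAB hvB) (h ▸ huA)
      rcases hpmf with h | h
      · exact ⟨v', by rw [← h], fun hh => huv (h.symm.trans hh.symm)⟩
      · exact ⟨u, by rw [h, Sym2.eq_swap], fun hh => huv (hh.trans h)⟩
    obtain ⟨x, hfx, hxpm⟩ := hx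
    by_cases hxp : ∃ i, i ≤ m ∧ p i = x
    · left
      obtain ⟨i, him, hix⟩ := hxp
      have hineM : i ≠ m := fun h => hxpm (by rw [← hix, h])
      have hineM1 : i ≠ m - 1 := by
        intro h
        apply hfne
        rw [hfx, ← hix, h, Sym2.eq_swap]
      have him2 : i + 2 ≤ m := by omega
      set c := m - i + 1 with hcdef
      set q : ℕ → V := fun j => if j = c then p i else p (i + j) with hqdef
      have hq : ∀ j, j ≠ c → q j = p (i + j) := by
        intro j hj; rw [hqdef]; simp [hj]
      have hqc : q c = p i := by rw [hqdef]; simp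
      have hq0 : q 0 = p i := by rw [hq 0 (by omega)]; norm_num
      have hedgeq : ∀ j ∈ Finset.Icc 1 c, s(q (j-1), q j) ∈ E := by
        intro j hj
        simp only [Finset.mem_Icc] at hj
        by_cases hjc : j = c
        · subst hjc
          rw [hq (c-1) (by omega), hqc]
          have h1 : i + (c - 1) = m := by omega
          rw [h1, hix, ← hfx]
          exact hfE
        · rw [hq (j-1) (by omega), hq j hjc]
          have h1 : i + (j - 1) = (i + j) - 1 := by omega
          rw [h1]
          exact hedge (i+j) (by simp only [Finset.mem_Icc]; omega)
      have hqe : ∀ d, 1 ≤ d → d ≤ c →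
          s(q (d-1), q d) = if d = c then s(p m, p i) else s(p ((i+d)-1), p (i+d)) := by
        intro d hd1 hdc
        by_cases hdc' : d = c
        · subst hdc'
          rw [hq (c-1) (by omega), hqc, if_pos rfl]
          have h1 : i + (c - 1) = m := by omega
          rw [h1]
        · rw [hq (d-1) (by omega), hq d hdc', if_neg hdc']
          have h1 : i + (d - 1) = (i + d) - 1 := by omega
          rw [h1]
      have heinjq : ∀ a ∈ Finset.Icc 1 c, ∀ b ∈ Finset.Icc 1 c,
          s(q (a-1), q a) = s(q (b-1), q b) → a = b := by
        intro a ha b hb hab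
        simp only [Finset.mem_Icc] at ha hb
        rw [hqe a ha.1 ha.2, hqe b hb.1 hb.2] at hab
        by_cases hac : a = c <;> by_cases hbc : b = c
        · omega
        · rw [if_pos hac, if_neg hbc, Sym2.eq_iff] at hab
          rcases hab with ⟨h1, h2⟩ | ⟨h1, h2⟩
          · have e1 := hinj m le_rfl ((i+b)-1) (by omega) h1
            have e2 := hinj i (by omega) (i+b) (by omega) h2
            omega
          · have e1 := hinj m le_rfl (i+b) (by omega) h1
            have e2 := hinj i (by omega) ((i+b)-1) (by omega) h2
            omega
        · rw [if_neg hac, if_pos hbc, Sym2.eq_iff] at hab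
          rcases hab with ⟨h1, h2⟩ | ⟨h1, h2⟩
          · have e1 := hinj ((i+a)-1) (by omega) m le_rfl h1
            have e2 := hinj (i+a) (by omega) i (by omega) h2
            omega
          · have e1 := hinj ((i+a)-1) (by omega) i (by omega) h1
            have e2 := hinj (i+a) (by omega) m le_rfl h2
            omega
        · rw [if_neg hac, if_neg hbc, Sym2.eq_iff] at hab
          rcases hab with ⟨h1, h2⟩ | ⟨h1, h2⟩
          · have e1 := hinj ((i+a)-1) (by omega) ((i+b)-1) (by omega) h1
            have e2 := hinj (i+a) (by omega) (i+b) (by omega) h2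
            omega
          · have e1 := hinj ((i+a)-1) (by omega) (i+b) (by omega) h1
            have e2 := hinj (i+a) (by omega) ((i+b)-1) (by omega) h2
            omega
      have hinjq : ∀ a < c, ∀ b < c, q a = q b → a = b := by
        intro a hac b hbc hab
        rw [hq a (by omega), hq b (by omega)] at hab
        have := hinj (i+a) (by omega) (i+b) (by omega) hab
        omega
      exact ⟨c, q, DRisAlt_of_cycle hAB hbip (by omega) hedgeq heinjq hinjq (by rw [hqc, hq0])⟩
    · push_neg at hxp
      set p' : ℕ → V := fun j => if j ≤ m then p j else x with hp'def
      have hp'le : ∀ j, j ≤ m → p' j = p j := by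
        intro j hj; rw [hp'def]; simp [hj]
      have hp'x : p' (m+1) = x := by rw [hp'def]; simp
      have hedge' : ∀ j ∈ Finset.Icc 1 (m+1), s(p' (j-1), p' j) ∈ E := by
        intro j hj
        simp only [Finset.mem_Icc] at hj
        by_cases hjm : j = m + 1
        · subst hjm
          simp only [Nat.add_sub_cancel]
          rw [hp'x, hp'le m le_rfl, ← hfx]
          exact hfE
        · rw [hp'le (j-1) (by omega), hp'le j (by omega)]
          exact hedge j (by simp only [Finset.mem_Icc]; omega)
      have hinj' : ∀ a ≤ m+1, ∀ b ≤ m+1, p' a = p' b → a = b := by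
        intro a ha b hb hab
        by_cases ham : a = m+1 <;> by_cases hbm : b = m+1
        · omega
        · subst ham
          rw [hp'x, hp'le b (by omega)] at hab
          exact absurd hab.symm (hxp b (by omega))
        · subst hbm
          rw [hp'x, hp'le a (by omega)] at hab
          exact absurd hab (hxp a (by omega))
        · rw [hp'le a (by omega), hp'le b (by omega)] at hab
          exact hinj a (by omega) b (by omega) hab
      have hbase : p' 0 = p 0 := hp'le 0 (by omega)
      rcases ih (m+1) p' (by omega) hedge' hinj' (by omega) with h | ⟨m', p'', h1, h2, h3, h4, h5⟩
      · exact Or.inl h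
      · exact Or.inr ⟨m', p'', h1, h2, h3, by rw [h4, hbase], h5⟩

lemma DRexists_alt {A B : Finset V} (hAB : Disjoint A B) {E : Finset (Sym2 V)}
    (hbip : ∀ e ∈ E, ∃ u v, e = s(u, v) ∧ u ∈ A ∧ v ∈ B)
    (hne : E.Nonempty) : ∃ m p, DRIsAlt E m p := by
  obtain ⟨e0, he0⟩ := hne
  obtain ⟨a, b, hab, haA, hbB⟩ := hbip e0 he0
  have habne : a ≠ b := fun h => (Finset.disjoint_right.mp hAB hbB) (h ▸ haA)
  set p : ℕ → V := fun j => if j = 0 then a else b with hpdef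
  have hp0 : p 0 = a := by simp [hpdef]
  have hp1 : p 1 = b := by simp [hpdef]
  have hedge : ∀ j ∈ Finset.Icc 1 1, s(p (j-1), p j) ∈ E := by
    intro j hj
    simp only [Finset.mem_Icc] at hj
    have hj1 : j = 1 := by omega
    subst hj1
    rw [show (1:ℕ) - 1 = 0 from rfl, hp0, hp1, ← hab]
    exact he0
  have hinj : ∀ i ≤ 1, ∀ j ≤ 1, p i = p j → i = j := by
    intro i hi j hj hij
    interval_cases i <;> interval_cases j <;> simp_all
  rcases DRextend hAB hbip ((A ∪ B).card) 1 p le_rfl hedge hinj (by omega) with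
    h | ⟨m1, p1, hm1, hedge1, hinj1, _, hdeg1⟩
  · exact h
  set q : ℕ → V := fun j => p1 (m1 - j) with hqdef
  have hq : ∀ j, q j = p1 (m1 - j) := fun j => by rw [hqdef]
  have hedgeq : ∀ j ∈ Finset.Icc 1 m1, s(q (j-1), q j) ∈ E := by
    intro j hj
    simp only [Finset.mem_Icc] at hj
    rw [hq, hq]
    have h1 : m1 - (j-1) = (m1 - j) + 1 := by omega
    rw [h1, Sym2.eq_swap]
    have hres := hedge1 (m1 - j + 1) (by simp only [Finset.mem_Icc]; omega)
    have h3 : m1 - j + 1 - 1 = m1 - j := by omega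
    rw [h3] at hres
    exact hres
  have hinjq : ∀ i ≤ m1, ∀ j ≤ m1, q i = q j → i = j := by
    intro i hi j hj h
    rw [hq, hq] at h
    have := hinj1 (m1 - i) (by omega) (m1 - j) (by omega) h
    omega
  rcases DRextend hAB hbip ((A ∪ B).card) m1 q hm1 hedgeq hinjq (by omega) with
    h | ⟨m2, p2, hm2, hedge2, hinj2, hp20, hdeg2⟩
  · exact h
  refine ⟨m2, p2, DRisAlt_of_path hm2 hedge2 hinj2 ?_ hdeg2⟩
  rw [hp20, hq]
  simpa using hdeg1

lemma DRshift {A B : Finset V} (hAB : Disjoint A B) {E : Finset (Sym2 V)}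
    (hbip : ∀ e ∈ E, ∃ u v, e = s(u, v) ∧ u ∈ A ∧ v ∈ B)
    (hne : E.Nonempty) (w : Sym2 V → ℝ)
    (hfrac : ∀ e ∈ E, 0 < w e ∧ w e < 1) :
    ∃ w' : Sym2 V → ℝ,
      (∀ f ∈ E, 0 ≤ w' f ∧ w' f ≤ 1) ∧
      (∑ f ∈ E, w f ≤ ∑ f ∈ E, w' f) ∧
      (∀ v : V, ⌈∑ f ∈ E.filter (fun f => v ∈ f), w' f⌉₊ ≤
        ⌈∑ f ∈ E.filter (fun f => v ∈ f), w f⌉₊) ∧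
      (E.filter (fun f => 0 < w' f ∧ w' f < 1)).card < E.card := by
  obtain ⟨m, p, hm, hedge, heinj, htau⟩ := DRexists_alt hAB hbip hne
  set sl : ℕ → ℝ := fun j => if Even (j-1) then 1 - w (s(p (j-1), p j)) else w (s(p (j-1), p j))
    with hsldef
  have hIcc : (Finset.Icc 1 m).Nonempty := ⟨1, by simp only [Finset.mem_Icc]; omega⟩
  set ε := (Finset.Icc 1 m).inf' hIcc sl with hεdef
  have hεpos : 0 < ε := by
    rw [hεdef, Finset.lt_inf'_iff]
    intro j hj
    obtain ⟨hw1, hw2⟩ := hfrac _ (hedge j hj)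
    simp only [hsldef]
    split_ifs <;> linarith
  have hεle : ∀ j ∈ Finset.Icc 1 m, ε ≤ sl j := fun j hj => Finset.inf'_le _ hj
  obtain ⟨js, hjs, hjseq⟩ := Finset.exists_mem_eq_inf' hIcc sl
  set σ : Sym2 V → ℝ :=
    fun f => ∑ j ∈ Finset.Icc 1 m, (if f = s(p (j-1), p j) then ((-1:ℝ))^(j-1) else 0) with hσdef
  set w' : Sym2 V → ℝ := fun f => w f + ε * σ f with hw'def
  have hw'val : ∀ f, w' f = w f + ε * σ f := fun f => by rw [hw'def]
  have hσe : ∀ j0 ∈ Finset.Icc 1 m, σ (s(p (j0-1), p j0)) = ((-1:ℝ))^(j0-1) := by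
    intro j0 hj0
    simp only [hσdef]
    rw [Finset.sum_eq_single j0]
    · rw [if_pos rfl]
    · intro b hb hbne
      exact if_neg (fun hEq => hbne ((heinj j0 hj0 b hb hEq).symm))
    · intro h; exact absurd hj0 h
  have hσo : ∀ f, (∀ j ∈ Finset.Icc 1 m, f ≠ s(p (j-1), p j)) → σ f = 0 := by
    intro f hf
    simp only [hσdef]
    exact Finset.sum_eq_zero fun j hj => if_neg (hf j hj)
  have hwb : ∀ f ∈ E, 0 ≤ w' f ∧ w' f ≤ 1 := by
    intro f hfE
    obtain ⟨hp1, hp2⟩ := hfrac f hfE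
    by_cases hfe : ∃ j ∈ Finset.Icc 1 m, f = s(p (j-1), p j)
    · obtain ⟨j0, hj0, rfl⟩ := hfe
      have hs := hεle j0 hj0
      simp only [hsldef] at hs
      rw [hw'val, hσe j0 hj0]
      rcases Nat.even_or_odd (j0-1) with hev | hod
      · rw [hev.neg_one_pow, mul_one]
        rw [if_pos hev] at hs
        constructor <;> linarith
      · rw [hod.neg_one_pow, mul_neg_one]
        rw [if_neg (by simp [Nat.even_iff, Nat.odd_iff.mp hod])] at hs
        constructor <;> linarith
    · push_neg at hfe
      rw [hw'val, hσo f hfe, mul_zero, add_zero]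
      exact ⟨hp1.le, hp2.le⟩
  have hsum : ∑ f ∈ E, w f ≤ ∑ f ∈ E, w' f := by
    have h1 : ∑ f ∈ E, w' f = ∑ f ∈ E, w f + ε * ∑ f ∈ E, σ f := by
      simp only [hw'val]
      rw [Finset.sum_add_distrib, Finset.mul_sum]
    have h2 : ∑ f ∈ E, σ f = ∑ j ∈ Finset.Icc 1 m, ((-1:ℝ))^(j-1) := by
      simp only [hσdef]
      rw [Finset.sum_comm]
      refine Finset.sum_congr rfl fun j hj => ?_
      rw [Finset.sum_ite_eq' E (s(p (j-1), p j)) (fun _ => ((-1:ℝ))^(j-1)),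
        if_pos (hedge j hj)]
    have h3 : (0:ℝ) ≤ ∑ j ∈ Finset.Icc 1 m, ((-1:ℝ))^(j-1) := by
      have h4 : ∑ j ∈ Finset.Icc 1 m, ((-1:ℝ))^(j-1)
          = ∑ i ∈ Finset.range m, ((-1:ℝ))^i := by
        rw [← Finset.Ico_add_one_right_eq_Icc, Finset.sum_Ico_eq_sum_range]
        simp
      rw [h4, neg_one_geom_sum]
      split_ifs <;> norm_num
    rw [h1, h2]
    nlinarith
  have hτ : ∀ v : V, ∑ f ∈ E.filter (fun f => v ∈ f), w' f
      = (∑ f ∈ E.filter (fun f => v ∈ f), w f)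
        + ε * ∑ j ∈ Finset.Icc 1 m, (if v ∈ s(p (j-1), p j) then ((-1:ℝ))^(j-1) else 0) := by
    intro v
    simp only [hw'val]
    rw [Finset.sum_add_distrib]
    congr 1
    rw [← Finset.mul_sum]
    congr 1
    simp only [hσdef]
    rw [Finset.sum_comm]
    refine Finset.sum_congr rfl fun j hj => ?_
    rw [Finset.sum_ite_eq' (E.filter (fun f => v ∈ f)) (s(p (j-1), p j))
      (fun _ => ((-1:ℝ))^(j-1))]
    simp [Finset.mem_filter, hedge j hj]
  have hceil : ∀ v : V, ⌈∑ f ∈ E.filter (fun f => v ∈ f), w' f⌉₊ ≤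
      ⌈∑ f ∈ E.filter (fun f => v ∈ f), w f⌉₊ := by
    intro v
    rcases htau v with h | h
    · rw [hτ v, h, mul_zero, add_zero]
    · have hcard : (E.filter (fun f => v ∈ f)).card = 1 := h
      obtain ⟨f0, hf0⟩ := Finset.card_eq_one.mp hcard
      have hf0E : f0 ∈ E := by
        have hmem : f0 ∈ E.filter (fun f => v ∈ f) := by
          rw [hf0]; exact Finset.mem_singleton_self f0
        exact (Finset.mem_filter.mp hmem).1
      rw [hf0, Finset.sum_singleton, Finset.sum_singleton]
      have h1 : ⌈w' f0⌉₊ ≤ 1 := Nat.ceil_le.mpr (by push_cast; exact (hwb f0 hf0E).2)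
      have h2 : 1 ≤ ⌈w f0⌉₊ := Nat.one_le_ceil_iff.mpr (hfrac f0 hf0E).1
      omega
  have hstarE : s(p (js-1), p js) ∈ E := hedge js hjs
  have hstar : w' (s(p (js-1), p js)) = 0 ∨ w' (s(p (js-1), p js)) = 1 := by
    have hs : ε = sl js := hjseq
    rw [hw'val, hσe js hjs]
    simp only [hsldef] at hs
    rcases Nat.even_or_odd (js-1) with hev | hod
    · right
      rw [hev.neg_one_pow, mul_one, hs, if_pos hev]
      ring
    · left
      rw [hod.neg_one_pow, mul_neg_one, hs,
        if_neg (by simp [Nat.even_iff, Nat.odd_iff.mp hod])]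
      ring
  have hlt : (E.filter (fun f => 0 < w' f ∧ w' f < 1)).card < E.card := by
    have hsubs : E.filter (fun f => 0 < w' f ∧ w' f < 1) ⊆ E.erase (s(p (js-1), p js)) := by
      intro f hf
      rw [Finset.mem_filter] at hf
      rw [Finset.mem_erase]
      refine ⟨fun hfeq => ?_, hf.1⟩
      rcases hstar with h | h
      · rw [hfeq, h] at hf; exact lt_irrefl 0 hf.2.1
      · rw [hfeq, h] at hf; exact lt_irrefl 1 hf.2.2
    calc (E.filter (fun f => 0 < w' f ∧ w' f < 1)).card
        ≤ (E.erase (s(p (js-1), p js))).card := Finset.card_le_card hsubs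
      _ < E.card := Finset.card_erase_lt_of_mem hstarE
  exact ⟨w', hwb, hsum, hceil, hlt⟩

lemma DRrounding {A B : Finset V} (hAB : Disjoint A B) :
    ∀ n : ℕ, ∀ E : Finset (Sym2 V), ∀ w : Sym2 V → ℝ,
      E.card + (E.filter (fun e => 0 < w e ∧ w e < 1)).card ≤ n →
      (∀ e ∈ E, ∃ u v, e = s(u, v) ∧ u ∈ A ∧ v ∈ B) →
      (∀ e ∈ E, 0 ≤ w e ∧ w e ≤ 1) →
      ∃ F : Finset (Sym2 V), F ⊆ E ∧ (∀ e ∈ F, 0 < w e) ∧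
        (∑ e ∈ E, w e) ≤ (F.card : ℝ) ∧
        ∀ v : V, deg F v ≤ ⌈∑ e ∈ E.filter (fun e => v ∈ e), w e⌉₊ := by
  intro n
  induction n with
  | zero =>
    intro E w hn hbip hw
    have hE : E = ∅ := Finset.card_eq_zero.mp (by omega)
    subst hE
    exact ⟨∅, Finset.Subset.refl _, by simp, by simp, fun v => by simp [deg]⟩
  | succ n ih =>
    intro E w hn hbip hw
    by_cases h0 : ∃ e0 ∈ E, w e0 ≤ 0
    · obtain ⟨e0, he0, hw0⟩ := h0
      have hw0' : w e0 = 0 := le_antisymm hw0 (hw e0 he0).1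
      have hmeas : (E.erase e0).card
          + ((E.erase e0).filter (fun e => 0 < w e ∧ w e < 1)).card ≤ n := by
        have h1 : (E.erase e0).card = E.card - 1 := Finset.card_erase_of_mem he0
        have h2 := Finset.card_le_card (Finset.filter_subset_filter
          (fun e => 0 < w e ∧ w e < 1) (Finset.erase_subset e0 E))
        have h3 : 0 < E.card := Finset.card_pos.mpr ⟨e0, he0⟩
        omega
      obtain ⟨F, hF1, hF2, hF3, hF4⟩ := ih (E.erase e0) w hmeas
        (fun e he => hbip e (Finset.mem_of_mem_erase he))
        (fun e he => hw e (Finset.mem_of_mem_erase he))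
      have hsumE : ∑ e ∈ E, w e = ∑ e ∈ E.erase e0, w e := by
        rw [← Finset.add_sum_erase E w he0, hw0', zero_add]
      refine ⟨F, hF1.trans (Finset.erase_subset e0 E), hF2, by rw [hsumE]; exact hF3,
        fun v => ?_⟩
      have hfil : ∑ e ∈ E.filter (fun e => v ∈ e), w e
          = ∑ e ∈ (E.erase e0).filter (fun e => v ∈ e), w e := by
        conv_lhs => rw [← Finset.insert_erase he0]
        rw [Finset.filter_insert]
        split_ifs with hv
        · rw [Finset.sum_insert (by simp), hw0', zero_add]
        · rfl
      rw [hfil]; exact hF4 v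
    · by_cases h1 : ∃ e0 ∈ E, 1 ≤ w e0
      · obtain ⟨e0, he0, hw1⟩ := h1
        have hw1' : w e0 = 1 := le_antisymm (hw e0 he0).2 hw1
        have hmeas : (E.erase e0).card
            + ((E.erase e0).filter (fun e => 0 < w e ∧ w e < 1)).card ≤ n := by
          have hh1 : (E.erase e0).card = E.card - 1 := Finset.card_erase_of_mem he0
          have hh2 := Finset.card_le_card (Finset.filter_subset_filter
            (fun e => 0 < w e ∧ w e < 1) (Finset.erase_subset e0 E))
          have hh3 : 0 < E.card := Finset.card_pos.mpr ⟨e0, he0⟩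
          omega
        obtain ⟨F, hF1, hF2, hF3, hF4⟩ := ih (E.erase e0) w hmeas
          (fun e he => hbip e (Finset.mem_of_mem_erase he))
          (fun e he => hw e (Finset.mem_of_mem_erase he))
        have he0F : e0 ∉ F := fun h => Finset.notMem_erase e0 E (hF1 h)
        refine ⟨insert e0 F, ?_, ?_, ?_, ?_⟩
        · intro f hf
          rcases Finset.mem_insert.mp hf with rfl | hf
          · exact he0
          · exact Finset.mem_of_mem_erase (hF1 hf)
        · intro f hf
          rcases Finset.mem_insert.mp hf with rfl | hf
          · rw [hw1']; norm_num
          · exact hF2 f hf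
        · rw [Finset.card_insert_of_notMem he0F]
          have hsumE : ∑ e ∈ E, w e = 1 + ∑ e ∈ E.erase e0, w e := by
            rw [← Finset.add_sum_erase E w he0, hw1']
          rw [hsumE]
          push_cast
          linarith
        · intro v
          by_cases hv : v ∈ e0
          · have hfil : ∑ e ∈ E.filter (fun e => v ∈ e), w e
                = 1 + ∑ e ∈ (E.erase e0).filter (fun e => v ∈ e), w e := by
              conv_lhs => rw [← Finset.insert_erase he0]
              rw [Finset.filter_insert, if_pos hv, Finset.sum_insert (by simp), hw1']
            have hnn : 0 ≤ ∑ e ∈ (E.erase e0).filter (fun e => v ∈ e), w e :=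
              Finset.sum_nonneg fun e he =>
                (hw e (Finset.mem_of_mem_erase (Finset.mem_of_mem_filter _ he))).1
            rw [hfil, add_comm, Nat.ceil_add_one hnn]
            have hdegle : deg (insert e0 F) v ≤ deg F v + 1 := by
              unfold deg
              rw [Finset.filter_insert, if_pos hv]
              exact Finset.card_insert_le _ _
            have := hF4 v
            omega
          · have hfil : ∑ e ∈ E.filter (fun e => v ∈ e), w e
                = ∑ e ∈ (E.erase e0).filter (fun e => v ∈ e), w e := by
              conv_lhs => rw [← Finset.insert_erase he0]
              rw [Finset.filter_insert, if_neg hv]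
            have hdegeq : deg (insert e0 F) v = deg F v := by
              unfold deg
              rw [Finset.filter_insert, if_neg hv]
            rw [hfil, hdegeq]
            exact hF4 v
      · push_neg at h0 h1
        rcases Finset.eq_empty_or_nonempty E with rfl | hne
        · exact ⟨∅, Finset.Subset.refl _, by simp, by simp, fun v => by simp [deg]⟩
        · have hfrac : ∀ e ∈ E, 0 < w e ∧ w e < 1 := fun e he => ⟨h0 e he, h1 e he⟩
          obtain ⟨w', hwb, hsum, hceil, hlt⟩ := DRshift hAB hbip hne w hfrac
          have hmeas : E.card + (E.filter (fun e => 0 < w' e ∧ w' e < 1)).card ≤ n := by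
            have hfe : E.filter (fun e => 0 < w e ∧ w e < 1) = E :=
              Finset.filter_true_of_mem hfrac
            rw [hfe] at hn
            omega
          obtain ⟨F, hF1, hF2, hF3, hF4⟩ := ih E w' hmeas hbip hwb
          exact ⟨F, hF1, fun e he => (hfrac e (hF1 he)).1, le_trans hsum hF3,
            fun v => le_trans (hF4 v) (hceil v)⟩


/-- (Dependent rounding.) Let `G` be a bipartite graph with parts `A`,
`B` and edge set partitioned into levels `E_1, …, E_k`, with edge weights
`w : E → [0,1]` such that for every level `j` and edge `e = (u,v) ∈ E_j` of positive
weight, `∑_{i=1}^{j} (w-deg_{E_i}(u) + w-deg_{E_i}(v)) ≤ β'`. Then there is `F ⊆ E` with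
`|F| ≥ ∑_e w(e)` such that for every `j` and every edge `(u,v) ∈ F ∩ E_j`,
`∑_{i=1}^{j} (deg_{F∩E_i}(u) + deg_{F∩E_i}(v)) ≤ β' + 2k − 1`; i.e. `F` with the
decomposition `F_i := F ∩ (E_1 ∪ … ∪ E_i)` satisfies the HEDCS edge-degree constraint
with bound `β' + 2k − 1`. -/
theorem dependent_rounding_hedcs {V : Type*} [DecidableEq V]
    (k βp : ℕ) (hk : 1 ≤ k) (hβp : 1 ≤ βp)
    (A B : Finset V) (hAB : Disjoint A B)
    (Elev : ℕ → Finset (Sym2 V))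
    (hdisj : ∀ i ∈ Finset.Icc 1 k, ∀ j ∈ Finset.Icc 1 k, i ≠ j →
      Disjoint (Elev i) (Elev j))
    (hbip : ∀ i ∈ Finset.Icc 1 k, ∀ e ∈ Elev i, ∃ u v, e = s(u, v) ∧ u ∈ A ∧ v ∈ B)
    (w : Sym2 V → ℝ)
    (hw : ∀ i ∈ Finset.Icc 1 k, ∀ e ∈ Elev i, 0 ≤ w e ∧ w e ≤ 1)
    (hconstraint : ∀ j ∈ Finset.Icc 1 k, ∀ u v : V,
      s(u, v) ∈ Elev j → 0 < w (s(u, v)) →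
      ∑ i ∈ Finset.Icc 1 j,
        ((∑ e ∈ (Elev i).filter (fun e => u ∈ e), w e) +
          (∑ e ∈ (Elev i).filter (fun e => v ∈ e), w e)) ≤ (βp : ℝ)) :
    ∃ F : Finset (Sym2 V), F ⊆ (Finset.Icc 1 k).biUnion Elev ∧
      (∑ e ∈ (Finset.Icc 1 k).biUnion Elev, w e) ≤ (F.card : ℝ) ∧
      ∀ j ∈ Finset.Icc 1 k, ∀ u v : V, s(u, v) ∈ F ∩ Elev j →
        ∑ i ∈ Finset.Icc 1 j, (deg (F ∩ Elev i) u + deg (F ∩ Elev i) v) ≤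
          βp + 2 * k - 1 := by
  classical
  have key : ∀ i ∈ Finset.Icc 1 k, ∃ Fi : Finset (Sym2 V),
      Fi ⊆ Elev i ∧ (∀ e ∈ Fi, 0 < w e) ∧
      (∑ e ∈ Elev i, w e) ≤ (Fi.card : ℝ) ∧
      ∀ v : V, deg Fi v ≤ ⌈∑ e ∈ (Elev i).filter (fun e => v ∈ e), w e⌉₊ := by
    intro i hi
    exact DRrounding hAB
      ((Elev i).card + ((Elev i).filter (fun e => 0 < w e ∧ w e < 1)).card)
      (Elev i) w le_rfl (hbip i hi) (hw i hi)
  choose! Fi hFi using key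
  have hcap : ∀ i ∈ Finset.Icc 1 k, ((Finset.Icc 1 k).biUnion Fi) ∩ Elev i = Fi i := by
    intro i hi
    apply Finset.Subset.antisymm
    · intro x hx
      rw [Finset.mem_inter, Finset.mem_biUnion] at hx
      obtain ⟨⟨i', hi', hxi'⟩, hxE⟩ := hx
      by_cases h : i' = i
      · exact h ▸ hxi'
      · exact absurd hxE (Finset.disjoint_left.mp (hdisj i' hi' i hi h)
          ((hFi i' hi').1 hxi'))
    · intro x hx
      rw [Finset.mem_inter]
      exact ⟨Finset.mem_biUnion.mpr ⟨i, hi, hx⟩, (hFi i hi).1 hx⟩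
  refine ⟨(Finset.Icc 1 k).biUnion Fi, ?_, ?_, ?_⟩
  · intro x hx
    rw [Finset.mem_biUnion] at hx ⊢
    obtain ⟨i, hi, hxi⟩ := hx
    exact ⟨i, hi, (hFi i hi).1 hxi⟩
  · have hdisjF : ∀ i ∈ Finset.Icc 1 k, ∀ j ∈ Finset.Icc 1 k, i ≠ j →
        Disjoint (Fi i) (Fi j) := fun i hi j hj hij =>
      Finset.disjoint_of_subset_left (hFi i hi).1
        (Finset.disjoint_of_subset_right (hFi j hj).1 (hdisj i hi j hj hij))
    rw [Finset.card_biUnion hdisjF,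
      Finset.sum_biUnion (fun i hi j hj hij =>
        hdisj i (Finset.mem_coe.mp hi) j (Finset.mem_coe.mp hj) hij)]
    push_cast
    exact Finset.sum_le_sum fun i hi => (hFi i hi).2.2.1
  · intro j hj u v huv
    have hjk := Finset.mem_Icc.mp hj
    have hsubIcc : Finset.Icc 1 j ⊆ Finset.Icc 1 k := Finset.Icc_subset_Icc le_rfl hjk.2
    have huvF : s(u, v) ∈ Fi j := by rw [← hcap j hj]; exact huv
    have hwpos : 0 < w (s(u, v)) := (hFi j hj).2.1 _ huvF
    have hcon := hconstraint j hj u v ((hFi j hj).1 huvF) hwpos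
    have h1 : ∑ i ∈ Finset.Icc 1 j,
        (deg (((Finset.Icc 1 k).biUnion Fi) ∩ Elev i) u
          + deg (((Finset.Icc 1 k).biUnion Fi) ∩ Elev i) v)
        ≤ ∑ i ∈ Finset.Icc 1 j,
          (⌈∑ e ∈ (Elev i).filter (fun e => u ∈ e), w e⌉₊
            + ⌈∑ e ∈ (Elev i).filter (fun e => v ∈ e), w e⌉₊) := by
      refine Finset.sum_le_sum fun i hi => ?_
      rw [hcap i (hsubIcc hi)]
      exact add_le_add ((hFi i (hsubIcc hi)).2.2.2 u) ((hFi i (hsubIcc hi)).2.2.2 v)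
    have h2 : ((∑ i ∈ Finset.Icc 1 j,
        (⌈∑ e ∈ (Elev i).filter (fun e => u ∈ e), w e⌉₊
          + ⌈∑ e ∈ (Elev i).filter (fun e => v ∈ e), w e⌉₊) : ℕ) : ℝ)
        < (βp : ℝ) + 2 * (k : ℝ) := by
      push_cast
      have h3 : ∀ i ∈ Finset.Icc 1 j,
          ((⌈∑ e ∈ (Elev i).filter (fun e => u ∈ e), w e⌉₊ : ℝ)
            + (⌈∑ e ∈ (Elev i).filter (fun e => v ∈ e), w e⌉₊ : ℝ))
          < ((∑ e ∈ (Elev i).filter (fun e => u ∈ e), w e) + 1)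
            + ((∑ e ∈ (Elev i).filter (fun e => v ∈ e), w e) + 1) := by
        intro i hi
        have hiK := hsubIcc hi
        have hnnu : 0 ≤ ∑ e ∈ (Elev i).filter (fun e => u ∈ e), w e :=
          Finset.sum_nonneg fun e he => (hw i hiK e (Finset.mem_of_mem_filter _ he)).1
        have hnnv : 0 ≤ ∑ e ∈ (Elev i).filter (fun e => v ∈ e), w e :=
          Finset.sum_nonneg fun e he => (hw i hiK e (Finset.mem_of_mem_filter _ he)).1
        exact add_lt_add (Nat.ceil_lt_add_one hnnu) (Nat.ceil_lt_add_one hnnv)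
      have hIccne : (Finset.Icc 1 j).Nonempty := ⟨1, by simp only [Finset.mem_Icc]; omega⟩
      have h4 := Finset.sum_lt_sum_of_nonempty hIccne h3
      have h5 : ∑ i ∈ Finset.Icc 1 j,
          (((∑ e ∈ (Elev i).filter (fun e => u ∈ e), w e) + 1)
            + ((∑ e ∈ (Elev i).filter (fun e => v ∈ e), w e) + 1))
          = (∑ i ∈ Finset.Icc 1 j,
            ((∑ e ∈ (Elev i).filter (fun e => u ∈ e), w e)
              + (∑ e ∈ (Elev i).filter (fun e => v ∈ e), w e))) + 2 * (j : ℝ) := by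
        rw [show ∀ f g : ℕ → ℝ, (fun i => ((f i + 1) + (g i + 1))) = (fun i => ((f i + g i) + 2))
          from fun f g => funext (fun i => by ring)]
        rw [Finset.sum_add_distrib, Finset.sum_const, Nat.card_Icc]
        simp only [nsmul_eq_mul]
        push_cast
        ring
      rw [h5] at h4
      have hjkR : (j : ℝ) ≤ (k : ℝ) := by exact_mod_cast hjk.2
      calc _ < _ := h4
        _ ≤ (βp : ℝ) + 2 * (k : ℝ) := by linarith
    have h6 : (∑ i ∈ Finset.Icc 1 j,
        (⌈∑ e ∈ (Elev i).filter (fun e => u ∈ e), w e⌉₊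
          + ⌈∑ e ∈ (Elev i).filter (fun e => v ∈ e), w e⌉₊)) < βp + 2 * k := by
      exact_mod_cast h2
    omega
end
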